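/- arXiv:1710.04339 — 4 statements merged into one kernel-verified Lean document; each statement's English description precedes it below -/
import Mathlib

section
/- Let h : ℝ → ℝ be increasing and concave, and let β = lim_{x→∞} h'(x-). Then for every fixed x ∈ ℝ, inf_{z ≥ y} exp(h(x+z) - h(z)) → e^{βx} and sup_{z ≥ y} exp(h(x+z) - h(z)) → e^{βx} as y → ∞. -/
open Real Filter Set

lemma tail_inf_tendsto {f : ℝ → ℝ} {L : ℝ} (hf : Tendsto f atTop (nhds L)) :
    Tendsto (fun y : ℝ => sInf (f '' Set.Ici y)) atTop (nhds L) := by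
  rw [Metric.tendsto_nhds]
  intro ε hε
  obtain ⟨N, hN⟩ := Metric.tendsto_atTop.mp hf (ε / 2) (by positivity)
  filter_upwards [eventually_ge_atTop N] with y hy
  have hbdd : ∀ w ∈ f '' Set.Ici y, L - ε / 2 ≤ w := by
    rintro w ⟨z, hz, rfl⟩
    have := hN z (le_trans hy hz)
    rw [Real.dist_eq, abs_lt] at this
    linarith [this.1]
  have hne : (f '' Set.Ici y).Nonempty := ⟨f y, mem_image_of_mem f self_mem_Ici⟩
  have h1 : L - ε / 2 ≤ sInf (f '' Set.Ici y) := le_csInf hne hbdd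
  have h2 : sInf (f '' Set.Ici y) ≤ f y :=
    csInf_le ⟨L - ε / 2, hbdd⟩ (mem_image_of_mem f self_mem_Ici)
  have hy' := hN y hy
  rw [Real.dist_eq, abs_lt] at hy' ⊢
  constructor <;> linarith [hy'.1, hy'.2]

lemma tail_sup_tendsto {f : ℝ → ℝ} {L : ℝ} (hf : Tendsto f atTop (nhds L)) :
    Tendsto (fun y : ℝ => sSup (f '' Set.Ici y)) atTop (nhds L) := by
  rw [Metric.tendsto_nhds]
  intro ε hε
  obtain ⟨N, hN⟩ := Metric.tendsto_atTop.mp hf (ε / 2) (by positivity)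
  filter_upwards [eventually_ge_atTop N] with y hy
  have hbdd : ∀ w ∈ f '' Set.Ici y, w ≤ L + ε / 2 := by
    rintro w ⟨z, hz, rfl⟩
    have := hN z (le_trans hy hz)
    rw [Real.dist_eq, abs_lt] at this
    linarith [this.2]
  have hne : (f '' Set.Ici y).Nonempty := ⟨f y, mem_image_of_mem f self_mem_Ici⟩
  have h1 : sSup (f '' Set.Ici y) ≤ L + ε / 2 := csSup_le hne hbdd
  have h2 : f y ≤ sSup (f '' Set.Ici y) :=
    le_csSup ⟨L + ε / 2, hbdd⟩ (mem_image_of_mem f self_mem_Ici)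
  have hy' := hN y hy
  rw [Real.dist_eq, abs_lt] at hy' ⊢
  constructor <;> linarith [hy'.1, hy'.2]

lemma slope_tendsto {h : ℝ → ℝ} {d : ℝ → ℝ}
    (hd : ∀ z : ℝ, HasDerivWithinAt h (d z) (Set.Iio z) z) (a : ℝ) :
    Tendsto (slope h a) (nhdsWithin a (Set.Iio a)) (nhds (d a)) := by
  have := (hasDerivWithinAt_iff_tendsto_slope).mp (hd a)
  have heq : Set.Iio a \ {a} = Set.Iio a :=
    Set.diff_singleton_eq_self (fun hx => lt_irrefl a hx)
  rwa [heq] at this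

lemma slope_upper {h : ℝ → ℝ} {d : ℝ → ℝ}
    (hconc : ConcaveOn ℝ Set.univ h)
    (hd : ∀ z : ℝ, HasDerivWithinAt h (d z) (Set.Iio z) z)
    {a b : ℝ} (hab : a < b) : h b - h a ≤ d a * (b - a) := by
  have key : (h b - h a) / (b - a) ≤ d a := by
    refine ge_of_tendsto (slope_tendsto hd a) ?_
    filter_upwards [self_mem_nhdsWithin] with t (ht : t < a)
    have := hconc.slope_anti_adjacent (Set.mem_univ t) (Set.mem_univ b) ht hab
    -- (h b - h a)/(b - a) ≤ (h a - h t)/(a - t)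
    have heq : slope h a t = (h a - h t) / (a - t) := by
      rw [slope_def_field]
      rw [div_eq_div_iff (by linarith) (by linarith)]
      ring
    rw [heq]
    exact this
  have hba : (0:ℝ) < b - a := by linarith
  calc h b - h a = (h b - h a) / (b - a) * (b - a) := by field_simp
    _ ≤ d a * (b - a) := by nlinarith

lemma slope_lower {h : ℝ → ℝ} {d : ℝ → ℝ}
    (hconc : ConcaveOn ℝ Set.univ h)
    (hd : ∀ z : ℝ, HasDerivWithinAt h (d z) (Set.Iio z) z)
    {a b : ℝ} (hab : a < b) : d b * (b - a) ≤ h b - h a := by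
  have key : d b ≤ (h b - h a) / (b - a) := by
    refine le_of_tendsto (slope_tendsto hd b) ?_
    have hmem : Set.Ioo a b ∈ nhdsWithin b (Set.Iio b) := by
      rw [show Set.Ioo a b = Set.Iio b ∩ Set.Ioi a by
        ext t; simp [Set.mem_Ioo, and_comm]]
      exact inter_mem_nhdsWithin _ (Ioi_mem_nhds hab)
    filter_upwards [hmem] with t ht
    obtain ⟨hat, htb⟩ := ht
    have hadj := hconc.slope_anti_adjacent (Set.mem_univ a) (Set.mem_univ b) hat htb
    -- (h b - h t)/(b - t) ≤ (h t - h a)/(t - a)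
    have heq : slope h b t = (h b - h t) / (b - t) := by
      rw [slope_def_field]
      rw [div_eq_div_iff (by linarith) (by linarith)]
      ring
    rw [heq]
    have hbt : (0:ℝ) < b - t := by linarith
    have hta : (0:ℝ) < t - a := by linarith
    have hba : (0:ℝ) < b - a := by linarith
    rw [div_le_div_iff₀ hbt hta] at hadj
    rw [div_le_div_iff₀ hbt hba]
    nlinarith
  have hba : (0:ℝ) < b - a := by linarith
  calc d b * (b - a) ≤ (h b - h a) / (b - a) * (b - a) := by nlinarith
    _ = h b - h a := by field_simp

/-- Let `h : ℝ → ℝ` be nondecreasing and concave with left-hand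
derivative `d z` at every `z` and `d z → β` as `z → ∞`. Then for every fixed
`x ∈ ℝ`, both `inf_{z ≥ y} exp (h (x+z) - h z)` and
`sup_{z ≥ y} exp (h (x+z) - h z)` tend to `e^{βx}` as `y → ∞`. -/
theorem stmt4 (h : ℝ → ℝ) (d : ℝ → ℝ) (β : ℝ)
    (hmono : Monotone h)
    (hconc : ConcaveOn ℝ Set.univ h)
    (hd : ∀ z : ℝ, HasDerivWithinAt h (d z) (Set.Iio z) z)
    (hβ : Tendsto d atTop (nhds β)) :
    ∀ x : ℝ,
      Tendsto (fun y : ℝ => sInf ((fun z => Real.exp (h (x + z) - h z)) '' Set.Ici y))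
        atTop (nhds (Real.exp (β * x))) ∧
      Tendsto (fun y : ℝ => sSup ((fun z => Real.exp (h (x + z) - h z)) '' Set.Ici y))
        atTop (nhds (Real.exp (β * x))) := by
  intro x
  have hbound : ∀ z : ℝ, d (x + z) * x ≤ h (x + z) - h z ∧ h (x + z) - h z ≤ d z * x := by
    intro z
    rcases lt_trichotomy x 0 with hx | hx | hx
    · have hab : x + z < z := by linarith
      have h1 := slope_lower hconc hd hab
      have h2 := slope_upper hconc hd hab
      constructor <;> nlinarith
    · simp [hx]
    · have hab : z < x + z := by linarith
      have h1 := slope_lower hconc hd hab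
      have h2 := slope_upper hconc hd hab
      constructor <;> nlinarith
  have hshift : Tendsto (fun z : ℝ => x + z) atTop atTop :=
    tendsto_atTop_add_const_left atTop x tendsto_id
  have hlow : Tendsto (fun z : ℝ => d (x + z) * x) atTop (nhds (β * x)) :=
    (hβ.comp hshift).mul_const x
  have hhigh : Tendsto (fun z : ℝ => d z * x) atTop (nhds (β * x)) :=
    hβ.mul_const x
  have hmid : Tendsto (fun z : ℝ => h (x + z) - h z) atTop (nhds (β * x)) :=
    tendsto_of_tendsto_of_tendsto_of_le_of_le hlow hhigh
      (fun z => (hbound z).1) (fun z => (hbound z).2)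
  have hexp : Tendsto (fun z : ℝ => Real.exp (h (x + z) - h z)) atTop
      (nhds (Real.exp (β * x))) :=
    (Real.continuous_exp.continuousAt).tendsto.comp hmid
  exact ⟨tail_inf_tendsto hexp, tail_sup_tendsto hexp⟩
end

section
/- Let h : ℝ → ℝ ∪ {-∞} be increasing and concave with h(x) > -∞, and let c = h'(x-) < ∞. For w ∈ [0,∞) define h_w(y) = h(x) + c(y-x) for y ≤ x+w and h_w(y) = h(y) + h(x) + cw - h(x+w) for y > x+w. Then: (a) h_w(y) ≥ h(y) for all y; (b) h_w(x) = h(x); (c) h_w is increasing, concave, and continuous; and (d) for 0 ≤ w₁ < w₂, 0 ≤ h_{w₂}(y) - h_{w₁}(y) ≤ h(x+w₁) + c(w₂-w₁) - h(x+w₂) for all y. -/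
open Filter Set Topology

/-!
Finite left difference quotients at `x` force `h` to be real-valued and concave on a half-line
reaching left of `x`, with left derivative `c` at `x`; hence no secant slope of `h` to the right
of `x` exceeds `c`. Let `h₀` be `h` with its graph left of `x` replaced by the tangent line
`ℓ y = h x + c (y - x)`; this keeps it concave. Then `h_w = min ℓ (h₀ + K w)` with
`K w = h x + c w - h (x + w)`, which is nonnegative and nondecreasing in `w`. So `h_w` is concave,
hence continuous, `h ≤ h₀ ≤ h_w`, and (d) holds because a minimum moves by at most the shift of
one of its arguments.
-/

section Slope

variable {𝕜 : Type*} [Field 𝕜] [LinearOrder 𝕜] [IsStrictOrderedRing 𝕜] {s : Set 𝕜} {f : 𝕜 → 𝕜}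

theorem ConcaveOn.slope_le_slope (hf : ConcaveOn 𝕜 s f) {u v p q : 𝕜} (hu : u ∈ s) (hq : q ∈ s)
    (huv : u < v) (hvp : v ≤ p) (hpq : p < q) : slope f p q ≤ slope f u v := by
  simp only [slope_def_field]
  rcases hvp.eq_or_lt with rfl | hvp
  · exact hf.slope_anti_adjacent hu hq huv hpq
  have hv : v ∈ s := hf.1.ordConnected.out hu hq ⟨huv.le, (hvp.trans hpq).le⟩
  have hp : p ∈ s := hf.1.ordConnected.out hu hq ⟨(huv.trans hvp).le, hpq.le⟩
  exact (hf.slope_anti_adjacent hv hq hvp hpq).trans (hf.slope_anti_adjacent hu hp huv hvp)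

end Slope

section LeftDerivative

variable {H : ℝ → ℝ} {a x c : ℝ}

theorem hasDerivWithinAt_Iio_of_tendsto_slope
    (hc : Tendsto (fun ε => (H x - H (x - ε)) / ε) (𝓝[>] 0) (𝓝 c)) :
    HasDerivWithinAt H c (Iio x) x := by
  rw [hasDerivWithinAt_iff_tendsto_slope' self_notMem_Iio]
  have hsub : Tendsto (fun y => x - y) (𝓝[<] x) (𝓝[>] 0) := by
    refine tendsto_nhdsWithin_iff.mpr ⟨?_, ?_⟩
    · exact ((continuous_sub_left x).tendsto' x 0 (sub_self x)).mono_left nhdsWithin_le_nhds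
    · filter_upwards [self_mem_nhdsWithin] with y (hy : y < x) using sub_pos.mpr hy
  refine (hc.comp hsub).congr fun y => ?_
  simp only [Function.comp_apply, sub_sub_cancel, slope_def_field]
  rw [← neg_sub y x, div_neg, ← neg_div, neg_sub]

theorem ConcaveOn.le_add_mul_sub_of_hasDerivWithinAt_Iio (hH : ConcaveOn ℝ (Ici a) H)
    (hd : HasDerivWithinAt H c (Iio x) x) (hax : a ≤ x) : H a ≤ H x + c * (a - x) := by
  rcases hax.eq_or_lt with rfl | hax
  · simp
  have := hH.le_slope_of_hasDerivWithinAt_Iio self_mem_Ici hax.le hax hd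
  rw [slope_def_field, le_div_iff₀ (sub_pos.mpr hax)] at this
  linarith

theorem ConcaveOn.sub_le_mul_of_hasDerivWithinAt_Iio (hH : ConcaveOn ℝ (Ici a) H) (hax : a < x)
    (hd : HasDerivWithinAt H c (Iio x) x) {p q : ℝ} (hxp : x ≤ p) (hpq : p ≤ q) :
    H q - H p ≤ c * (q - p) := by
  rcases hpq.eq_or_lt with rfl | hpq
  · simp
  have hslope : slope H p q ≤ c := by
    refine ge_of_tendsto ((hasDerivWithinAt_iff_tendsto_slope' self_notMem_Iio).mp hd) ?_
    filter_upwards [Ioo_mem_nhdsLT hax] with t ht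
    rw [slope_comm H x t]
    exact hH.slope_le_slope (mem_Ici.mpr ht.1.le) (mem_Ici.mpr (by linarith)) ht.2 hxp hpq
  rw [slope_def_field, div_le_iff₀ (sub_pos.mpr hpq)] at hslope
  linarith

end LeftDerivative

noncomputable section TangentSplice

variable {H : ℝ → ℝ} {x c : ℝ}

def tangentExtension (H : ℝ → ℝ) (x c : ℝ) (y : ℝ) : ℝ :=
  if y ≤ x then H x + c * (y - x) else H y

/-- The real-valued form of the paper's `h_w`. -/
def tangentSplice (H : ℝ → ℝ) (x c w : ℝ) (y : ℝ) : ℝ :=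
  if y ≤ x + w then H x + c * (y - x) else H y + (H x + c * w - H (x + w))

theorem tangentExtension_of_le {y : ℝ} (hy : y ≤ x) :
    tangentExtension H x c y = H x + c * (y - x) :=
  if_pos hy

theorem tangentExtension_of_ge {y : ℝ} (hy : x ≤ y) : tangentExtension H x c y = H y := by
  rcases hy.eq_or_lt with rfl | hy
  · simp [tangentExtension]
  · exact if_neg hy.not_ge

theorem monotone_tangentExtension (hc : 0 ≤ c) (hH : MonotoneOn H (Ici x)) :
    Monotone (tangentExtension H x c) := by
  intro p q hpq
  rcases le_total q x with hqx | hxq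
  · rw [tangentExtension_of_le (hpq.trans hqx), tangentExtension_of_le hqx]
    gcongr
  rw [tangentExtension_of_ge hxq]
  rcases le_total p x with hpx | hxp
  · rw [tangentExtension_of_le hpx]
    nlinarith [hH self_mem_Ici hxq hxq]
  · rw [tangentExtension_of_ge hxp]
    exact hH hxp hxq hpq

theorem concaveOn_tangentExtension (hH : ConcaveOn ℝ (Ici x) H)
    (htan : ∀ q, x ≤ q → H q - H x ≤ c * (q - x)) :
    ConcaveOn ℝ univ (tangentExtension H x c) := by
  refine concaveOn_of_slope_anti_adjacent convex_univ fun {a m b} _ _ ham hmb => ?_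
  have hma : 0 < m - a := sub_pos.mpr ham
  have hbm : 0 < b - m := sub_pos.mpr hmb
  rcases le_or_gt b x with hbx | hxb
  · rw [tangentExtension_of_le (y := a) (by linarith),
      tangentExtension_of_le (y := m) (by linarith), tangentExtension_of_le hbx,
      div_le_div_iff₀ hbm hma]
    nlinarith
  rcases le_or_gt x a with hxa | hax
  · rw [tangentExtension_of_ge hxa, tangentExtension_of_ge (y := m) (by linarith),
      tangentExtension_of_ge (y := b) (by linarith)]
    exact hH.slope_anti_adjacent hxa (mem_Ici.mpr (by linarith)) ham hmb
  rw [tangentExtension_of_le hax.le, tangentExtension_of_ge hxb.le, div_le_div_iff₀ hbm hma]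
  rcases le_or_gt m x with hmx | hxm
  · rw [tangentExtension_of_le hmx]
    nlinarith [htan b hxb.le]
  · rw [tangentExtension_of_ge hxm.le]
    have hmb_slope := hH.slope_anti_adjacent self_mem_Ici (mem_Ici.mpr hxb.le) hxm hmb
    rw [div_le_div_iff₀ hbm (sub_pos.mpr hxm)] at hmb_slope
    have hxm_tan := htan m hxm.le
    refine le_of_mul_le_mul_right ?_ (sub_pos.mpr hxm)
    nlinarith [mul_le_mul_of_nonneg_right hmb_slope hma.le,
      mul_le_mul_of_nonneg_right hxm_tan (mul_nonneg hbm.le (sub_pos.mpr hax).le)]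

variable {w : ℝ}

theorem tangentSplice_eq_min (hslope : ∀ p q, x ≤ p → p ≤ q → H q - H p ≤ c * (q - p))
    (hw : 0 ≤ w) (y : ℝ) : tangentSplice H x c w y =
      min (H x + c * (y - x)) (tangentExtension H x c y + (H x + c * w - H (x + w))) := by
  have hgap := hslope x (x + w) le_rfl (by linarith)
  unfold tangentSplice
  split_ifs with hyw
  · refine (min_eq_left ?_).symm
    rcases le_total y x with hyx | hxy
    · rw [tangentExtension_of_le hyx]
      nlinarith
    · rw [tangentExtension_of_ge hxy]
      linarith [hslope y (x + w) hxy hyw]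
  · rw [tangentExtension_of_ge (by linarith), min_eq_right]
    linarith [hslope (x + w) y (by linarith) (by linarith)]

theorem tangentExtension_le_tangentSplice
    (hslope : ∀ p q, x ≤ p → p ≤ q → H q - H p ≤ c * (q - p)) (hw : 0 ≤ w) (y : ℝ) :
    tangentExtension H x c y ≤ tangentSplice H x c w y := by
  rw [tangentSplice_eq_min hslope hw]
  refine le_min ?_ (by linarith [hslope x (x + w) le_rfl (by linarith)])
  rcases le_total y x with hyx | hxy
  · exact (tangentExtension_of_le hyx).le
  · rw [tangentExtension_of_ge hxy]
    linarith [hslope x y le_rfl hxy]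

theorem concaveOn_tangentSplice (hH : ConcaveOn ℝ (Ici x) H)
    (hslope : ∀ p q, x ≤ p → p ≤ q → H q - H p ≤ c * (q - p)) (hw : 0 ≤ w) :
    ConcaveOn ℝ univ (tangentSplice H x c w) := by
  have hline : ConcaveOn ℝ univ fun y => H x + c * (y - x) :=
    (((LinearMap.lsmul ℝ ℝ c).concaveOn convex_univ).add_const (H x - c * x)).congr
      fun y _ => by simp; ring
  have htan q (hq : x ≤ q) := hslope x q le_rfl hq
  refine (hline.inf ((concaveOn_tangentExtension hH htan).add_const
    (H x + c * w - H (x + w)))).congr fun y _ => ?_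
  simp [tangentSplice_eq_min hslope hw]

theorem monotone_tangentSplice (hH : MonotoneOn H (Ici x))
    (hslope : ∀ p q, x ≤ p → p ≤ q → H q - H p ≤ c * (q - p)) (hw : 0 ≤ w) :
    Monotone (tangentSplice H x c w) := by
  have hc : 0 ≤ c := by
    nlinarith [hslope x (x + 1) le_rfl (by linarith),
      hH self_mem_Ici (mem_Ici.mpr (by linarith : x ≤ x + 1)) (by linarith)]
  rw [funext (tangentSplice_eq_min hslope hw)]
  exact Monotone.min (fun p q hpq => by gcongr)
    ((monotone_tangentExtension hc hH).add_const _)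

theorem tangentSplice_sub_tangentSplice_bounds
    (hslope : ∀ p q, x ≤ p → p ≤ q → H q - H p ≤ c * (q - p)) {w₁ w₂ : ℝ} (hw₁ : 0 ≤ w₁)
    (hw : w₁ ≤ w₂) (y : ℝ) :
    0 ≤ tangentSplice H x c w₂ y - tangentSplice H x c w₁ y ∧
      tangentSplice H x c w₂ y - tangentSplice H x c w₁ y ≤
        H (x + w₁) + c * (w₂ - w₁) - H (x + w₂) := by
  rw [tangentSplice_eq_min hslope hw₁, tangentSplice_eq_min hslope (hw₁.trans hw)]
  have hgap := hslope (x + w₁) (x + w₂) (by linarith) (by linarith)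
  set L := H x + c * (y - x)
  set E := tangentExtension H x c y
  refine ⟨sub_nonneg.mpr (min_le_min_left _ (by linarith)), ?_⟩
  have : min L (E + (H x + c * w₂ - H (x + w₂))) ≤
      min L (E + (H x + c * w₁ - H (x + w₁))) + (H (x + w₁) + c * (w₂ - w₁) - H (x + w₂)) := by
    rw [← min_add_add_right]
    exact min_le_min (by linarith) (by linarith)
  linarith

end TangentSplice

def ERealConcave (h : ℝ → EReal) : Prop :=
  ∀ a b θ : ℝ, 0 < θ → θ < 1 →
    (θ : EReal) * h a + ((1 - θ : ℝ) : EReal) * h b ≤ h (θ * a + (1 - θ) * b)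

section ERealConcave

variable {h : ℝ → EReal} {a b x c : ℝ}

theorem ERealConcave.ne_top (hconc : ERealConcave h) (hmono : Monotone h) (hab : a < b)
    (ha : h a ≠ ⊥) (hb : h b ≠ ⊤) (y : ℝ) : h y ≠ ⊤ := by
  rcases le_or_gt y b with hyb | hby
  · exact ne_top_of_le_ne_top hb (hmono hyb)
  intro hy
  have hay : 0 < y - a := by linarith
  have hθ0 : 0 < (y - b) / (y - a) := div_pos (by linarith) hay
  have hθ1 : (y - b) / (y - a) < 1 := (div_lt_one hay).mpr (by linarith)
  have hmid : (y - b) / (y - a) * a + (1 - (y - b) / (y - a)) * y = b := by field_simp; ring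
  have key := hconc a y _ hθ0 hθ1
  rw [hmid, hy, ← EReal.coe_toReal (ne_top_of_le_ne_top hb (hmono hab.le)) ha,
    EReal.mul_top_of_pos (EReal.coe_pos.mpr (sub_pos.mpr hθ1)), ← EReal.coe_mul,
    EReal.coe_add_top] at key
  exact hb (top_le_iff.mp key)

theorem ERealConcave.concaveOn_toReal (hconc : ERealConcave h) (hmono : Monotone h)
    (htop : ∀ y, h y ≠ ⊤) (ha : h a ≠ ⊥) : ConcaveOn ℝ (Ici a) fun y => (h y).toReal := by
  have hcoe : ∀ y ∈ Ici a, h y = ((h y).toReal : EReal) := fun y hy =>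
    (EReal.coe_toReal (htop y) (ne_bot_of_le_ne_bot ha (hmono hy))).symm
  refine concaveOn_iff_forall_pos.mpr ⟨convex_Ici a, fun p hp q hq θ μ hθ hμ hsum => ?_⟩
  obtain rfl : μ = 1 - θ := by linarith
  have hmem : θ • p + (1 - θ) • q ∈ Ici a := convex_Ici a hp hq hθ.le hμ.le hsum
  simp only [smul_eq_mul] at hmem ⊢
  have key := hconc p q θ hθ (by linarith)
  rw [hcoe p hp, hcoe q hq, hcoe _ hmem] at key
  exact_mod_cast key

theorem exists_lt_ne_bot_of_tendsto_slope (hx : h x ≠ ⊥)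
    (hc : Tendsto (fun ε : ℝ => ((1 / ε : ℝ) : EReal) * (h x - h (x - ε)))
      (𝓝[>] 0) (𝓝 (c : EReal))) :
    ∃ a < x, h a ≠ ⊥ ∧ h x ≠ ⊤ := by
  obtain ⟨ε, ⟨hne_top, hne_bot⟩, hε⟩ := ((hc.eventually_ne (EReal.coe_ne_top c)).and
    (hc.eventually_ne (EReal.coe_ne_bot c)) |>.and self_mem_nhdsWithin).exists
  have hε' : (0 : EReal) < ((1 / ε : ℝ) : EReal) := EReal.coe_pos.mpr (one_div_pos.mpr hε)
  refine ⟨x - ε, sub_lt_self x hε, ?_⟩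
  have hD_top : h x - h (x - ε) ≠ ⊤ := fun hD => hne_top (by rw [hD, EReal.mul_top_of_pos hε'])
  have hD_bot : h x - h (x - ε) ≠ ⊥ := fun hD => hne_bot (by rw [hD, EReal.mul_bot_of_pos hε'])
  generalize h x = u, h (x - ε) = v at hx hD_top hD_bot
  induction u using EReal.rec <;> induction v using EReal.rec <;> simp_all

theorem tendsto_toReal_slope (hmono : Monotone h) (htop : ∀ y, h y ≠ ⊤) (ha : h a ≠ ⊥)
    (hax : a < x)
    (hc : Tendsto (fun ε : ℝ => ((1 / ε : ℝ) : EReal) * (h x - h (x - ε)))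
      (𝓝[>] 0) (𝓝 (c : EReal))) :
    Tendsto (fun ε => ((h x).toReal - (h (x - ε)).toReal) / ε) (𝓝[>] 0) (𝓝 c) := by
  have hcoe : ∀ y, a ≤ y → h y = ((h y).toReal : EReal) := fun y hy =>
    (EReal.coe_toReal (htop y) (ne_bot_of_le_ne_bot ha (hmono hy))).symm
  rw [← EReal.tendsto_coe]
  refine hc.congr' ?_
  filter_upwards [Ioo_mem_nhdsGT (sub_pos.mpr hax)] with ε hε
  calc ((1 / ε : ℝ) : EReal) * (h x - h (x - ε))
      = ((1 / ε : ℝ) : EReal) * (((h x).toReal : EReal) - ((h (x - ε)).toReal : EReal)) := by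
        rw [← hcoe x hax.le, ← hcoe (x - ε) (by linarith [hε.2])]
    _ = _ := by rw [← EReal.coe_sub, ← EReal.coe_mul, one_div_mul_eq_div]

theorem ConcaveOn.erealConcave_coe {f : ℝ → ℝ} (hf : ConcaveOn ℝ univ f) :
    ERealConcave fun y => (f y : EReal) := by
  intro p q θ hθ0 hθ1
  dsimp only
  have key := hf.2 (mem_univ p) (mem_univ q) hθ0.le (sub_nonneg.mpr hθ1.le) (by ring)
  simp only [smul_eq_mul] at key
  exact_mod_cast key

theorem ERealConcave.le_tangentExtension (hconc : ERealConcave h) (hmono : Monotone h)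
    (htop : ∀ y, h y ≠ ⊤) (hx : h x ≠ ⊥)
    (hd : HasDerivWithinAt (fun y => (h y).toReal) c (Iio x) x) (y : ℝ) :
    h y ≤ tangentExtension (fun y => (h y).toReal) x c y := by
  rcases le_or_gt y x with hyx | hxy
  · rw [tangentExtension_of_le hyx]
    rcases eq_or_ne (h y) ⊥ with hy | hy
    · simp [hy]
    rw [← EReal.coe_toReal (htop y) hy]
    exact_mod_cast (hconc.concaveOn_toReal hmono htop hy).le_add_mul_sub_of_hasDerivWithinAt_Iio
      hd hyx
  · rw [tangentExtension_of_ge hxy.le,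
      EReal.coe_toReal (htop y) (ne_bot_of_le_ne_bot hx (hmono hxy.le))]

theorem ite_eq_coe_tangentSplice (hmono : Monotone h) (htop : ∀ y, h y ≠ ⊤) (hx : h x ≠ ⊥)
    {w : ℝ} (hw : 0 ≤ w) (y : ℝ) :
    (if y ≤ x + w then h x + ((c * (y - x) : ℝ) : EReal)
      else h y + h x + ((c * w : ℝ) : EReal) - h (x + w)) =
      tangentSplice (fun y => (h y).toReal) x c w y := by
  have hcoe : ∀ y, x ≤ y → h y = ((h y).toReal : EReal) := fun y hy =>
    (EReal.coe_toReal (htop y) (ne_bot_of_le_ne_bot hx (hmono hy))).symm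
  rw [tangentSplice]
  split_ifs with hyw
  · conv_lhs => rw [hcoe x le_rfl]
    norm_cast
  · conv_lhs => rw [hcoe x le_rfl, hcoe y (by linarith), hcoe (x + w) (by linarith)]
    norm_cast
    ring

end ERealConcave

/-- Let `h : ℝ → EReal` be nondecreasing and concave with
`h x ≠ -∞`, and let `c = h'(x-) < ∞` be the (finite) left derivative of `h`
at `x`.  For `w ∈ [0,∞)` define `h_w(y) = h(x) + c(y-x)` for `y ≤ x+w` and
`h_w(y) = h(y) + h(x) + cw - h(x+w)` for `y > x+w`. Then:
(a) `h_w ≥ h`; (b) `h_w(x) = h(x)`; (c) `h_w` is nondecreasing, concave and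
continuous; (d) for `0 ≤ w₁ < w₂` and all `y`,
`0 ≤ h_{w₂}(y) - h_{w₁}(y) ≤ h(x+w₁) + c(w₂-w₁) - h(x+w₂)`. -/
theorem stmt8 (h : ℝ → EReal)
    (hmono : Monotone h)
    (hconc : ∀ a b θ : ℝ, 0 < θ → θ < 1 →
      (θ : EReal) * h a + ((1 - θ : ℝ) : EReal) * h b ≤ h (θ * a + (1 - θ) * b))
    (x : ℝ) (hx : h x ≠ ⊥)
    (c : ℝ)
    (hc : Tendsto (fun ε : ℝ => ((1 / ε : ℝ) : EReal) * (h x - h (x - ε)))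
      (nhdsWithin 0 (Set.Ioi 0)) (nhds ((c : ℝ) : EReal)))
    (hw : ℝ → ℝ → EReal)
    (hwdef : ∀ w y : ℝ, hw w y =
      if y ≤ x + w then h x + ((c * (y - x) : ℝ) : EReal)
      else h y + h x + ((c * w : ℝ) : EReal) - h (x + w)) :
    (∀ w : ℝ, 0 ≤ w → ∀ y : ℝ, h y ≤ hw w y) ∧
    (∀ w : ℝ, 0 ≤ w → hw w x = h x) ∧
    (∀ w : ℝ, 0 ≤ w →
      Monotone (hw w) ∧
      (∀ a b θ : ℝ, 0 < θ → θ < 1 →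
        (θ : EReal) * hw w a + ((1 - θ : ℝ) : EReal) * hw w b
          ≤ hw w (θ * a + (1 - θ) * b)) ∧
      Continuous (hw w)) ∧
    (∀ w₁ w₂ : ℝ, 0 ≤ w₁ → w₁ < w₂ → ∀ y : ℝ,
      0 ≤ hw w₂ y - hw w₁ y ∧
      hw w₂ y - hw w₁ y ≤ h (x + w₁) + ((c * (w₂ - w₁) : ℝ) : EReal) - h (x + w₂)) := by
  have hconcE : ERealConcave h := hconc
  obtain ⟨a, hax, ha, hxtop⟩ := exists_lt_ne_bot_of_tendsto_slope hx hc
  have htop := hconcE.ne_top hmono hax ha hxtop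
  set H : ℝ → ℝ := fun y => (h y).toReal
  have hd : HasDerivWithinAt H c (Iio x) x :=
    hasDerivWithinAt_Iio_of_tendsto_slope (tendsto_toReal_slope hmono htop ha hax hc)
  have hslope : ∀ p q, x ≤ p → p ≤ q → H q - H p ≤ c * (q - p) := fun p q =>
    (hconcE.concaveOn_toReal hmono htop ha).sub_le_mul_of_hasDerivWithinAt_Iio hax hd
  have hconcx : ConcaveOn ℝ (Ici x) H := hconcE.concaveOn_toReal hmono htop hx
  have hmonox : MonotoneOn H (Ici x) := fun p hp q _ hpq =>
    EReal.toReal_le_toReal (hmono hpq) (ne_bot_of_le_ne_bot hx (hmono hp)) (htop q)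
  have hw_eq (w : ℝ) (hw0 : 0 ≤ w) (y : ℝ) : hw w y = tangentSplice H x c w y :=
    (hwdef w y).trans (ite_eq_coe_tangentSplice hmono htop hx hw0 y)
  refine ⟨fun w hw0 y => ?_, fun w hw0 => ?_, fun w hw0 => ⟨?_, ?_, ?_⟩, fun w₁ w₂ hw₁ hw y => ?_⟩
  · rw [hw_eq w hw0]
    exact (hconcE.le_tangentExtension hmono htop hx hd y).trans
      (EReal.coe_le_coe_iff.mpr (tangentExtension_le_tangentSplice hslope hw0 y))
  · rw [hwdef, if_pos (by linarith)]
    simp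
  · rw [funext (hw_eq w hw0)]
    exact EReal.coe_strictMono.monotone.comp (monotone_tangentSplice hmonox hslope hw0)
  · rw [funext (hw_eq w hw0)]
    exact (concaveOn_tangentSplice hconcx hslope hw0).erealConcave_coe
  · rw [funext (hw_eq w hw0)]
    exact continuous_coe_real_ereal.comp (continuousOn_univ.mp
      ((concaveOn_tangentSplice hconcx hslope hw0).continuousOn isOpen_univ))
  · obtain ⟨hlow, hupp⟩ := tangentSplice_sub_tangentSplice_bounds hslope hw₁ hw.le y
    rw [hw_eq w₁ hw₁, hw_eq w₂ (by linarith), ← EReal.coe_toReal (htop (x + w₁)),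
      ← EReal.coe_toReal (htop (x + w₂))]
    · exact ⟨by exact_mod_cast hlow, by exact_mod_cast hupp⟩
    all_goals exact ne_bot_of_le_ne_bot hx (hmono (by linarith))
end

section
/- Let (Xₙ) be a random walk with P(ξ > 0) > 0, q ≥ 0, and g : ℝ → [0,∞) nonconstant, increasing, logconcave. Suppose E_y[e^{-q T_y} g(X_{T_y}) 1_{T_y<∞}] ≥ g(y) for some y > x₀ := inf{s : g(s) > 0}. Then g(x) ≤ E_x[e^{-q τ_y} g(X_{τ_y}) 1_{τ_y<∞}] for all x < y. -/
open MeasureTheory ProbabilityTheory Real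

variable {Ω : Type*}

/-- The random walk `X n = x + ξ 1 + ... + ξ n` (increments indexed from 1). -/
noncomputable def walk (x : ℝ) (ξ : ℕ → Ω → ℝ) (n : ℕ) (ω : Ω) : ℝ :=
  x + ∑ i ∈ Finset.range n, ξ (i + 1) ω

/-- `τ_v`: first time `n ≥ 0` with `X n ≥ v` (`⊤` if never). -/
noncomputable def hitFrom0 (X : ℕ → Ω → ℝ) (v : ℝ) (ω : Ω) : ℕ∞ :=
  ⨅ n ∈ {n : ℕ | v ≤ X n ω}, (n : ℕ∞)

/-- `T_v`: first time `n ≥ 1` with `X n ≥ v` (`⊤` if never). -/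
noncomputable def hitFrom1 (X : ℕ → Ω → ℝ) (v : ℝ) (ω : Ω) : ℕ∞ :=
  ⨅ n ∈ {n : ℕ | 1 ≤ n ∧ v ≤ X n ω}, (n : ℕ∞)

/-- The discounted reward `e^{-qτ} g(X_τ) 1_{τ<∞}`, as an `ℝ≥0∞`-valued r.v. -/
noncomputable def payoff (q : ℝ) (g : ℝ → ℝ) (X : ℕ → Ω → ℝ) (τ : Ω → ℕ∞) (ω : Ω) : ENNReal :=
  if τ ω = ⊤ then 0
  else ENNReal.ofReal (Real.exp (-q * ((τ ω).toNat : ℝ)) * g (X ((τ ω).toNat) ω))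

/-- The natural filtration (as σ-algebras) of the process `X`. -/
def natSigma [MeasurableSpace Ω] (X : ℕ → Ω → ℝ) (n : ℕ) : MeasurableSpace Ω :=
  ⨆ i ∈ Set.Iic n, MeasurableSpace.comap (X i) inferInstance

/-- `τ` is a stopping time (with values in `ℕ ∪ {∞}`) of the natural filtration of `X`. -/
def IsStopping [MeasurableSpace Ω] (X : ℕ → Ω → ℝ) (τ : Ω → ℕ∞) : Prop :=
  ∀ n : ℕ, MeasurableSet[natSigma X n] {ω | τ ω ≤ (n : ℕ∞)}

/-!
Let `Φ(w)` be the value of stopping a walk started at `w` at its first weak ascending ladder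
epoch. Log-concavity makes `g (w + h) / g w` nonincreasing in `w`, so `Φ(y) ≥ g(y)` gives
`Φ(w) ≥ g(w)` for every `w ≤ y`. By the Markov property of the walk at its ladder epochs,
stopping at a ladder epoch below `y` is therefore dominated by going on to the next one, which
either reaches `y` (and is then `τ_y`) or is again below `y`. Iterating, `g(x)` is bounded by the
value of `τ_y` plus `g(y)` times the probability that the first `M` ladder epochs stay below `y`.
This probability decays geometrically in `M`: if `N δ ≥ y - x`, then `N` consecutive increments
`≥ δ` after a ladder epoch carry the walk above `y`, and they occur with probability
`P(ξ ≥ δ)^N > 0`, independently of the past.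
-/

open scoped ENNReal

noncomputable section

instance : BorelSpace ℕ∞ := ⟨borel_eq_top_of_countable.symm⟩

lemma tsum_indicator_le_of_pairwise_disjoint {α : Type*} {s : ℕ → Set α}
    (hs : Pairwise (Function.onFun Disjoint s)) {f : ℕ → α → ℝ≥0∞} {a : α} {C : ℝ≥0∞}
    (h : ∀ n, a ∈ s n → f n a ≤ C) : ∑' n, (s n).indicator (f n) a ≤ C := by
  by_cases ha : ∃ n, a ∈ s n
  · obtain ⟨n, hn⟩ := ha
    rw [tsum_eq_single n fun k hk =>
        Set.indicator_of_notMem (fun hk' => (hs hk).ne_of_mem hk' hn rfl) _,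
      Set.indicator_of_mem hn]
    exact h n hn
  · push Not at ha
    simp [Set.indicator_of_notMem (ha _)]

section HittingTimes

variable {X : ℕ → Ω → ℝ} {v : ℝ} {ω : Ω} {n : ℕ}

lemma hitFrom0_eq_of_le_of_lt (hn : v ≤ X n ω) (hlt : ∀ j < n, X j ω < v) :
    hitFrom0 X v ω = n :=
  le_antisymm (iInf₂_le n hn) <| le_iInf₂ fun j hj =>
    Nat.cast_le.2 <| not_lt.1 fun hjn => (hlt j hjn).not_ge hj

lemma hitFrom1_spec (h : hitFrom1 X v ω = n) :
    1 ≤ n ∧ v ≤ X n ω ∧ ∀ j, 1 ≤ j → j < n → X j ω < v := by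
  set s := {k : ℕ | 1 ≤ k ∧ v ≤ X k ω}
  have hs : s.Nonempty := by
    by_contra hs
    rw [Set.not_nonempty_iff_eq_empty] at hs
    simp [hitFrom1, s, hs] at h
  rw [hitFrom1, ← ENat.natCast_sInf hs, Nat.cast_inj] at h
  subst h
  exact ⟨(Nat.sInf_mem hs).1, (Nat.sInf_mem hs).2, fun j hj hjn =>
    not_le.1 fun hv => Nat.notMem_of_lt_sInf hjn ⟨hj, hv⟩⟩

variable [MeasurableSpace Ω]

lemma measurable_iInf_mem_setOf_natCast {P : ℕ → Ω → Prop}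
    (hP : ∀ n, MeasurableSet {ω | P n ω}) :
    Measurable fun ω => ⨅ n ∈ {n | P n ω}, (n : ℕ∞) := by
  classical
  have h : (fun ω => ⨅ n ∈ {n | P n ω}, (n : ℕ∞))
      = fun ω => ⨅ n, if P n ω then (n : ℕ∞) else ⊤ := by
    funext ω
    simp only [Set.mem_ofPred_eq, iInf_eq_if]
  rw [h]
  exact Measurable.iInf fun n => Measurable.ite (hP n) measurable_const measurable_const

lemma measurable_hitFrom0 (hX : ∀ n, Measurable (X n)) : Measurable (hitFrom0 X v) :=
  measurable_iInf_mem_setOf_natCast fun n => measurableSet_le measurable_const (hX n)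

lemma measurable_hitFrom1 (hX : ∀ n, Measurable (X n)) : Measurable (hitFrom1 X v) :=
  measurable_iInf_mem_setOf_natCast fun n =>
    (MeasurableSet.const _).inter (measurableSet_le measurable_const (hX n))

lemma measurable_payoff {q : ℝ} {g : ℝ → ℝ} (hg : Measurable g) (hX : ∀ n, Measurable (X n))
    {τ : Ω → ℕ∞} (hτ : Measurable τ) : Measurable (payoff q g X τ) := by
  let F : Ω × ℕ∞ → ℝ≥0∞ := fun p => if p.2 = ⊤ then 0
    else ENNReal.ofReal (exp (-q * (p.2.toNat : ℝ)) * g (X p.2.toNat p.1))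
  have hF : Measurable F := measurable_from_prod_countable_left fun k => by
    by_cases hk : k = ⊤ <;> simp only [F, hk, if_true, if_false]
    · exact measurable_const
    · exact (measurable_const.mul (hg.comp (hX _))).ennreal_ofReal
  exact hF.comp (measurable_id.prodMk hτ)

end HittingTimes

namespace RandomWalk

def partialSum (u : ℕ → ℝ) (n : ℕ) : ℝ := ∑ i ∈ Finset.range n, u i

def seqWalk (x : ℝ) (n : ℕ) (u : ℕ → ℝ) : ℝ := x + partialSum u n

def shift (n : ℕ) (u : ℕ → ℝ) : ℕ → ℝ := fun i => u (n + i)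

section PartialSums

variable {u v : ℕ → ℝ} {n j : ℕ}

@[simp] lemma partialSum_zero (u : ℕ → ℝ) : partialSum u 0 = 0 := rfl

lemma partialSum_succ (u : ℕ → ℝ) (n : ℕ) : partialSum u (n + 1) = partialSum u n + u n :=
  Finset.sum_range_succ _ _

lemma partialSum_add (u : ℕ → ℝ) (n l : ℕ) :
    partialSum u (n + l) = partialSum u n + partialSum (shift n u) l :=
  Finset.sum_range_add _ _ _

lemma partialSum_congr (h : ∀ i < n, u i = v i) (hj : j ≤ n) :
    partialSum u j = partialSum v j :=
  Finset.sum_congr rfl fun i hi => h i (by simp at hi; omega)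

lemma measurable_partialSum (n : ℕ) : Measurable fun u : ℕ → ℝ => partialSum u n :=
  Finset.measurable_sum _ fun i _ => measurable_pi_apply i

lemma measurable_seqWalk (x : ℝ) (n : ℕ) : Measurable (seqWalk x n) :=
  measurable_const.add (measurable_partialSum n)

lemma seqWalk_shift (x : ℝ) (u : ℕ → ℝ) (n l : ℕ) :
    seqWalk (seqWalk x n u) l (shift n u) = seqWalk x (n + l) u := by
  simp only [seqWalk, partialSum_add, add_assoc]

end PartialSums

def IsLadderStep (u : ℕ → ℝ) (n n' : ℕ) : Prop :=
  n < n' ∧ partialSum u n ≤ partialSum u n' ∧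
    ∀ j, n < j → j < n' → partialSum u j < partialSum u n

/-- `LadderBelow c u m n`: `n` is the `m`-th weak ascending ladder epoch of the walk with
increments `u`, and all ladder heights up to it are below `c`. -/
def LadderBelow (c : ℝ) (u : ℕ → ℝ) : ℕ → ℕ → Prop
  | 0, n => n = 0 ∧ 0 < c
  | m + 1, n' => ∃ n, LadderBelow c u m n ∧ IsLadderStep u n n' ∧ partialSum u n' < c

def LadderCross (c : ℝ) (u : ℕ → ℝ) (m n' : ℕ) : Prop :=
  ∃ n, LadderBelow c u m n ∧ IsLadderStep u n n' ∧ c ≤ partialSum u n'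

section Ladder

variable {c δ : ℝ} {u v : ℕ → ℝ} {m k k' n n' n₁ n₂ : ℕ}

lemma IsLadderStep.unique (h₁ : IsLadderStep u n n₁) (h₂ : IsLadderStep u n n₂) : n₁ = n₂ := by
  by_contra hne
  rcases Nat.lt_or_gt_of_ne hne with h | h
  · exact (h₂.2.2 n₁ h₁.1 h).not_ge h₁.2.1
  · exact (h₁.2.2 n₂ h₂.1 h).not_ge h₂.2.1

lemma isLadderStep_succ (h : 0 ≤ u n) : IsLadderStep u n (n + 1) :=
  ⟨n.lt_succ_self, by rw [partialSum_succ]; linarith, fun j hj hj' => by omega⟩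

lemma IsLadderStep.congr (h : ∀ i < n', u i = v i) (hs : IsLadderStep u n n') :
    IsLadderStep v n n' := by
  obtain ⟨hlt, hle, hgap⟩ := hs
  refine ⟨hlt, ?_, fun j hj hj' => ?_⟩
  · rwa [← partialSum_congr h hlt.le, ← partialSum_congr h le_rfl]
  · rw [← partialSum_congr h hj'.le, ← partialSum_congr h hlt.le]
    exact hgap j hj hj'

lemma LadderBelow.unique (h₁ : LadderBelow c u m n₁) (h₂ : LadderBelow c u m n₂) : n₁ = n₂ := by
  induction m generalizing n₁ n₂ with
  | zero => exact h₁.1.trans h₂.1.symm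
  | succ m ih =>
    obtain ⟨k₁, hk₁, hs₁, -⟩ := h₁
    obtain ⟨k₂, hk₂, hs₂, -⟩ := h₂
    obtain rfl := ih hk₁ hk₂
    exact hs₁.unique hs₂

lemma LadderBelow.exists_of_add (h : LadderBelow c u (m + k) n') : ∃ n, LadderBelow c u m n := by
  induction k generalizing n' with
  | zero => exact ⟨n', h⟩
  | succ k ih =>
    obtain ⟨n, hn, -⟩ := h
    exact ih hn

lemma LadderBelow.partialSum_nonneg (h : LadderBelow c u m n) : 0 ≤ partialSum u n := by
  induction m generalizing n with
  | zero => simp [h.1]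
  | succ m ih =>
    obtain ⟨k, hk, hs, -⟩ := h
    exact (ih hk).trans hs.2.1

lemma LadderBelow.partialSum_lt (h : LadderBelow c u m n) : ∀ j ≤ n, partialSum u j < c := by
  induction m generalizing n with
  | zero =>
    obtain ⟨rfl, hc⟩ := h
    intro j hj
    simpa [Nat.le_zero.1 hj] using hc
  | succ m ih =>
    obtain ⟨k, hk, hs, hlt⟩ := h
    intro j hj
    rcases le_or_gt j k with hjk | hjk
    · exact ih hk j hjk
    rcases hj.lt_or_eq with hjn | rfl
    · exact (hs.2.2 j hjk hjn).trans (ih hk k le_rfl)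
    · exact hlt

lemma LadderBelow.congr (h : ∀ i < n, u i = v i) (hb : LadderBelow c u m n) :
    LadderBelow c v m n := by
  induction m generalizing n with
  | zero => exact hb
  | succ m ih =>
    obtain ⟨k, hk, hs, hlt⟩ := hb
    refine ⟨k, ih (fun i hi => h i (hi.trans hs.1)) hk, hs.congr h, ?_⟩
    rwa [← partialSum_congr h le_rfl]

lemma LadderCross.isFirstPassage (h : LadderCross c u m n') :
    c ≤ partialSum u n' ∧ ∀ j < n', partialSum u j < c := by
  obtain ⟨k, hk, hs, hc⟩ := h
  refine ⟨hc, fun j hj => ?_⟩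
  rcases le_or_gt j k with hjk | hjk
  · exact hk.partialSum_lt j hjk
  · exact (hs.2.2 j hjk hj).trans (hk.partialSum_lt k le_rfl)

lemma LadderCross.not_lt_index (h : LadderCross c u k n) (h' : LadderCross c u k' n')
    (hk : k < k') : False := by
  obtain ⟨b', hb', -⟩ := h'
  obtain ⟨b, a, ha, hs, hlt⟩ := (show LadderBelow c u (k + 1 + (k' - (k + 1))) b' by
    rwa [Nat.add_sub_cancel' hk]).exists_of_add
  obtain ⟨a', ha', hs', hc⟩ := h
  obtain rfl := ha.unique ha'
  obtain rfl := hs.unique hs'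
  exact hlt.not_ge hc

lemma LadderCross.index_unique (h : LadderCross c u k n) (h' : LadderCross c u k' n') :
    k = k' := by
  by_contra hne
  rcases Nat.lt_or_gt_of_ne hne with hk | hk
  exacts [h.not_lt_index h' hk, h'.not_lt_index h hk]

lemma LadderBelow.climb (hδ : 0 < δ) (hb : LadderBelow c u m n) (hu : ∀ j < k, δ ≤ u (n + j))
    (h : LadderBelow c u (m + k) n') :
    n' = n + k ∧ partialSum u n + k * δ ≤ partialSum u n' := by
  induction k generalizing n' with
  | zero =>
    obtain rfl := h.unique hb
    simp
  | succ k ih =>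
    obtain ⟨b, hb', hs, -⟩ := h
    obtain ⟨rfl, hsum⟩ := ih (fun j hj => hu j (by omega)) hb'
    have hstep : δ ≤ u (n + k) := hu k k.lt_succ_self
    obtain rfl := hs.unique (isLadderStep_succ (hδ.le.trans hstep))
    refine ⟨rfl, ?_⟩
    rw [partialSum_succ]
    push_cast
    linarith

lemma LadderBelow.exists_small_increment (hδ : 0 < δ) {N : ℕ} (hN : c ≤ N * δ)
    (h : LadderBelow c u (m + N) n') : ∃ n, LadderBelow c u m n ∧ ∃ j < N, u (n + j) < δ := by
  obtain ⟨n, hn⟩ := h.exists_of_add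
  refine ⟨n, hn, ?_⟩
  by_contra! hu
  have := (hn.climb hδ hu h).2
  linarith [hn.partialSum_nonneg, h.partialSum_lt n' le_rfl]

lemma measurable_isLadderStep (n n' : ℕ) : Measurable fun u => IsLadderStep u n n' :=
  measurable_const.and <|
    (measurableSet_le (measurable_partialSum n) (measurable_partialSum n')).mem.and <|
      Measurable.forall fun j => measurable_const.imp <| measurable_const.imp
        (measurableSet_lt (measurable_partialSum j) (measurable_partialSum n)).mem

lemma measurable_ladderBelow (c : ℝ) (m n : ℕ) : Measurable fun u => LadderBelow c u m n := by
  induction m generalizing n with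
  | zero => exact measurable_const
  | succ m ih =>
    exact Measurable.exists fun k => (ih k).and <| (measurable_isLadderStep k n).and
      (measurableSet_lt (measurable_partialSum n) measurable_const).mem

lemma measurable_ladderCross (c : ℝ) (m n : ℕ) : Measurable fun u => LadderCross c u m n :=
  Measurable.exists fun k => (measurable_ladderBelow c m k).and <|
    (measurable_isLadderStep k n).and
      (measurableSet_le measurable_const (measurable_partialSum n)).mem

lemma measurableSet_ladderBelow (c : ℝ) (m n : ℕ) : MeasurableSet {u | LadderBelow c u m n} :=
  (measurable_ladderBelow c m n).setOf

lemma pairwise_disjoint_ladderBelow (c : ℝ) (m : ℕ) :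
    Pairwise (Function.onFun Disjoint fun n => {u | LadderBelow c u m n}) :=
  fun _ _ hne => Set.disjoint_left.2 fun _ h₁ h₂ => hne (h₁.unique h₂)

lemma dependsOn_ladderBelow (c : ℝ) (m n : ℕ) :
    DependsOn (fun u => LadderBelow c u m n) (Set.Iio n) := fun _ _ h =>
  propext ⟨LadderBelow.congr fun i hi => h i hi, LadderBelow.congr fun i hi => (h i hi).symm⟩

end Ladder

section Markov

def concat (n : ℕ) (p : (ℕ → ℝ) × (ℕ → ℝ)) : ℕ → ℝ :=
  fun i => if i < n then p.1 i else p.2 (i - n)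

variable {n : ℕ}

lemma shift_concat (p : (ℕ → ℝ) × (ℕ → ℝ)) : shift n (concat n p) = p.2 := by
  ext i
  simp [shift, concat]

lemma concat_apply_of_lt {i : ℕ} (p : (ℕ → ℝ) × (ℕ → ℝ)) (hi : i < n) : concat n p i = p.1 i :=
  if_pos hi

lemma measurable_shift (n : ℕ) : Measurable (shift n) :=
  measurable_pi_lambda _ fun i => measurable_pi_apply (n + i)

lemma measurable_concat (n : ℕ) : Measurable (concat n) :=
  measurable_pi_lambda _ fun i => by
    by_cases hi : i < n
    · simp only [concat, hi, if_true]; fun_prop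
    · simp only [concat, hi, if_false]; fun_prop

variable (ν : Measure ℝ) [IsProbabilityMeasure ν]

local notation "P" => Measure.infinitePi fun _ : ℕ => ν

lemma map_concat_prod (n : ℕ) : (Measure.prod P P).map (concat n) = P := by
  classical
  refine Measure.eq_infinitePi _ fun s t ht => ?_
  have hpre : concat n ⁻¹' (s : Set ℕ).pi t = (↑(s.filter (· < n)) : Set ℕ).pi t ×ˢ
      (↑((s.filter fun i => ¬ i < n).image (· - n)) : Set ℕ).pi (fun j => t (j + n)) := by
    ext p
    simp only [Set.mem_preimage, Set.mem_pi, Finset.mem_coe, Set.mem_prod, Finset.mem_filter,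
      Finset.mem_image]
    constructor
    · intro h
      refine ⟨fun i hi => ?_, ?_⟩
      · simpa [concat, hi.2] using h i hi.1
      · rintro _ ⟨i, ⟨hi, hin⟩, rfl⟩
        simpa [concat, hin, Nat.sub_add_cancel (not_lt.1 hin)] using h i hi
    · rintro ⟨h₁, h₂⟩ i hi
      by_cases hin : i < n
      · simpa [concat, hin] using h₁ i ⟨hi, hin⟩
      · simpa [concat, hin, Nat.sub_add_cancel (not_lt.1 hin)] using
          h₂ (i - n) ⟨i, ⟨hi, hin⟩, rfl⟩
  rw [Measure.map_apply (measurable_concat n) (MeasurableSet.pi s.countable_toSet fun i _ => ht i),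
    hpre, Measure.prod_prod, Measure.infinitePi_pi _ fun i _ => ht i,
    Measure.infinitePi_pi _ fun i _ => ht (i + n),
    Finset.prod_image fun i hi j hj hij => by
      simp only [Finset.coe_filter, Set.mem_ofPred_eq] at hi hj
      omega,
    ← Finset.prod_filter_mul_prod_filter_not s (· < n)]
  congr 1
  refine Finset.prod_congr rfl fun i hi => ?_
  rw [Nat.sub_add_cancel (not_lt.1 (Finset.mem_filter.1 hi).2)]

/-- The simple Markov property of the walk at time `n`. -/
lemma lintegral_comp_shift (n : ℕ) {F : (ℕ → ℝ) → (ℕ → ℝ) → ℝ≥0∞}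
    (hF : Measurable (Function.uncurry F)) (hdep : ∀ b, DependsOn (F · b) (Set.Iio n)) :
    ∫⁻ u, F u (shift n u) ∂P = ∫⁻ a, ∫⁻ b, F a b ∂P ∂P := by
  have hG : Measurable fun u => F u (shift n u) :=
    hF.comp (measurable_id.prodMk (measurable_shift n))
  calc ∫⁻ u, F u (shift n u) ∂P
      = ∫⁻ u, F u (shift n u) ∂(Measure.prod P P).map (concat n) := by rw [map_concat_prod]
    _ = ∫⁻ p, Function.uncurry F p ∂(Measure.prod P P) := by
      rw [lintegral_map hG (measurable_concat n)]
      refine lintegral_congr fun p => ?_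
      rw [shift_concat]
      exact hdep p.2 fun i hi => concat_apply_of_lt p hi
    _ = ∫⁻ a, ∫⁻ b, F a b ∂P ∂P := lintegral_prod _ hF.aemeasurable

lemma measure_inter_shift_preimage (n : ℕ) {A B : Set (ℕ → ℝ)} (hA : MeasurableSet A)
    (hB : MeasurableSet B) (hdep : DependsOn (· ∈ A) (Set.Iio n)) :
    P (A ∩ shift n ⁻¹' B) = P A * P B := by
  have hF : Measurable (Function.uncurry fun a b : ℕ → ℝ =>
      A.indicator (1 : (ℕ → ℝ) → ℝ≥0∞) a * B.indicator 1 b) :=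
    ((measurable_one.indicator hA).comp measurable_fst).mul
      ((measurable_one.indicator hB).comp measurable_snd)
  have hdepF : ∀ b, DependsOn (fun a => A.indicator (1 : (ℕ → ℝ) → ℝ≥0∞) a * B.indicator 1 b)
      (Set.Iio n) := fun b a a' h => by
    have hA' : (a ∈ A) = (a' ∈ A) := hdep h
    by_cases ha : a ∈ A
    · simp [ha, cast hA' ha]
    · simp [ha, show a' ∉ A from hA' ▸ ha]
  calc P (A ∩ shift n ⁻¹' B) = ∫⁻ u, A.indicator 1 u * B.indicator 1 (shift n u) ∂P := by
        rw [← lintegral_indicator_one (hA.inter (measurable_shift n hB))]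
        refine lintegral_congr fun u => ?_
        by_cases hu : u ∈ A <;> by_cases hv : shift n u ∈ B <;> simp [hu, hv]
    _ = ∫⁻ a, ∫⁻ b, A.indicator 1 a * B.indicator 1 b ∂P ∂P := lintegral_comp_shift ν n hF hdepF
    _ = P A * P B := by
        simp_rw [lintegral_const_mul _ (measurable_one.indicator hB), lintegral_indicator_one hB]
        rw [lintegral_mul_const _ (measurable_one.indicator hA), lintegral_indicator_one hA]

end Markov

def IsLogConcave (g : ℝ → ℝ) : Prop :=
  ∀ a b θ : ℝ, 0 < θ → θ < 1 → g a ^ θ * g b ^ (1 - θ) ≤ g (θ * a + (1 - θ) * b)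

/-- The increment ratio `g (w + h) / g w` of a log-concave function is nonincreasing in `w`. -/
lemma IsLogConcave.mul_le_mul_of_le {g : ℝ → ℝ} (hg : IsLogConcave g) (hg0 : ∀ x, 0 ≤ g x)
    {w y h : ℝ} (hwy : w ≤ y) (hh : 0 ≤ h) : g (y + h) * g w ≤ g (w + h) * g y := by
  rcases hwy.eq_or_lt with rfl | hwy
  · exact le_rfl
  rcases hh.eq_or_lt with rfl | hh
  · simp [mul_comm]
  rcases (hg0 w).eq_or_lt with hw | hw
  · rw [← hw, mul_zero]
    exact mul_nonneg (hg0 _) (hg0 _)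
  rcases (hg0 (y + h)).eq_or_lt with hyh | hyh
  · rw [← hyh, zero_mul]
    exact mul_nonneg (hg0 _) (hg0 _)
  -- `w + h` and `y` are the two mixtures of `w` and `y + h` with weights `θ`, `1 - θ`
  set θ := (y - w) / (y - w + h)
  have hθ : θ * (y - w + h) = y - w := div_mul_cancel₀ _ (by linarith)
  have hθ0 : 0 < θ := div_pos (by linarith) (by linarith)
  have hθ1 : θ < 1 := (div_lt_one (by linarith)).2 (by linarith)
  have hA := hg w (y + h) θ hθ0 hθ1
  have hB := hg (y + h) w θ hθ0 hθ1
  rw [show θ * w + (1 - θ) * (y + h) = w + h by linear_combination -hθ] at hA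
  rw [show θ * (y + h) + (1 - θ) * w = y by linear_combination hθ] at hB
  have hsplit : ∀ {a : ℝ}, 0 < a → a ^ θ * a ^ (1 - θ) = a := fun ha => by
    rw [← rpow_add ha, add_sub_cancel, rpow_one]
  calc g (y + h) * g w
      = (g w ^ θ * g (y + h) ^ (1 - θ)) * (g (y + h) ^ θ * g w ^ (1 - θ)) := by
        conv_lhs => rw [← hsplit hw, ← hsplit hyh]
        ring
    _ ≤ g (w + h) * g y := _root_.mul_le_mul hA hB (by positivity) (hg0 _)

section Rewards

variable {q : ℝ} {g : ℝ → ℝ} {x y : ℝ} {u : ℕ → ℝ} {m n l : ℕ}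

def firstLadderEpoch (u : ℕ → ℝ) : ℕ∞ := hitFrom1 (seqWalk 0) 0 u

lemma hitFrom1_seqWalk_self (w : ℝ) : hitFrom1 (seqWalk w) w = firstLadderEpoch := by
  funext u
  simp [hitFrom1, firstLadderEpoch, seqWalk]

lemma isLadderStep_of_firstLadderEpoch_shift (h : firstLadderEpoch (shift n u) = l) :
    IsLadderStep u n (n + l) := by
  obtain ⟨hl, hnonneg, hneg⟩ := hitFrom1_spec h
  simp only [seqWalk, zero_add] at hnonneg hneg
  refine ⟨by omega, by rw [partialSum_add]; linarith, fun j hj hj' => ?_⟩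
  obtain ⟨k, rfl⟩ : ∃ k, j = n + k := ⟨j - n, by omega⟩
  have := hneg k (by omega) (by omega)
  rw [partialSum_add]
  linarith

lemma hitFrom0_seqWalk_of_ladderCross (h : LadderCross (y - x) u m n) :
    hitFrom0 (seqWalk x) y u = n := by
  obtain ⟨hc, hlt⟩ := h.isFirstPassage
  refine hitFrom0_eq_of_le_of_lt (by simp only [seqWalk]; linarith) fun j hj => ?_
  have := hlt j hj
  simp only [seqWalk]
  linarith

lemma measurable_firstLadderEpoch : Measurable firstLadderEpoch :=
  measurable_hitFrom1 (measurable_seqWalk 0)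

def reward (q : ℝ) (g : ℝ → ℝ) (x : ℝ) (n : ℕ) (u : ℕ → ℝ) : ℝ≥0∞ :=
  ENNReal.ofReal (exp (-q * n) * g (seqWalk x n u))

lemma payoff_seqWalk_of_eq {τ : (ℕ → ℝ) → ℕ∞} (h : τ u = n) :
    payoff q g (seqWalk x) τ u = reward q g x n u := by
  simp [payoff, reward, h]

lemma reward_le_of_ladderBelow (hq : 0 ≤ q) (hg0 : ∀ x, 0 ≤ g x) (hmono : Monotone g)
    (h : LadderBelow (y - x) u m n) : reward q g x n u ≤ ENNReal.ofReal (g y) := by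
  refine ENNReal.ofReal_le_ofReal ((mul_le_of_le_one_left (hg0 _) ?_).trans (hmono ?_))
  · exact exp_le_one_iff.2 (mul_nonpos_of_nonpos_of_nonneg (neg_nonpos.2 hq) n.cast_nonneg)
  · have := h.partialSum_lt n le_rfl
    simp only [seqWalk]
    linarith

lemma measurable_reward (hg : Measurable g) (q x : ℝ) (n : ℕ) : Measurable (reward q g x n) :=
  (measurable_const.mul (hg.comp (measurable_seqWalk x n))).ennreal_ofReal

def crossSet (x y : ℝ) (m : ℕ) : Set (ℕ → ℝ) := {u | ∃ n, LadderCross (y - x) u m n}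

/-- The discounted reward of restarting at the position of `p.1` at time `n` and stopping the
walk with increments `p.2` at its first ladder epoch. At `p = (u, shift n u)` this is the reward
at the ladder epoch following `n`. -/
def restartReward (q : ℝ) (g : ℝ → ℝ) (x : ℝ) (n : ℕ) (p : (ℕ → ℝ) × (ℕ → ℝ)) : ℝ≥0∞ :=
  ENNReal.ofReal (exp (-q * n)) * payoff q g (seqWalk (seqWalk x n p.1)) firstLadderEpoch p.2

lemma measurable_restartReward (hg : Measurable g) (q x : ℝ) (n : ℕ) :
    Measurable (restartReward q g x n) := by
  have h : restartReward q g x n = fun p => ENNReal.ofReal (exp (-q * n)) * payoff q g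
      (fun k p => seqWalk (seqWalk x n p.1) k p.2) (fun p => firstLadderEpoch p.2) p := by
    funext p
    simp only [restartReward, payoff]
  rw [h]
  exact measurable_const.mul <| measurable_payoff hg
    (fun k => ((measurable_seqWalk x n).comp measurable_fst).add
      ((measurable_partialSum k).comp measurable_snd))
    (measurable_firstLadderEpoch.comp measurable_snd)

lemma restartReward_le (hb : LadderBelow (y - x) u m n) :
    restartReward q g x n (u, shift n u)
      ≤ (crossSet x y m).indicator (payoff q g (seqWalk x) (hitFrom0 (seqWalk x) y)) u
        + ∑' n, {v | LadderBelow (y - x) v (m + 1) n}.indicator (reward q g x n) u := by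
  cases hT : firstLadderEpoch (shift n u) using ENat.recTopCoe with
  | top => simp [restartReward, payoff, hT]
  | coe l =>
    have hstep := isLadderStep_of_firstLadderEpoch_shift hT
    have hreward : restartReward q g x n (u, shift n u) = reward q g x (n + l) u := by
      rw [restartReward, payoff_seqWalk_of_eq hT, reward, reward, seqWalk_shift,
        ← ENNReal.ofReal_mul (exp_pos _).le, ← mul_assoc, ← exp_add]
      push_cast
      ring_nf
    rw [hreward]
    by_cases hc : y - x ≤ partialSum u (n + l)
    · have hcross : LadderCross (y - x) u m (n + l) := ⟨n, hb, hstep, hc⟩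
      rw [Set.indicator_of_mem (show u ∈ crossSet x y m from ⟨_, hcross⟩),
        payoff_seqWalk_of_eq (hitFrom0_seqWalk_of_ladderCross hcross)]
      exact le_self_add
    · have hbelow : LadderBelow (y - x) u (m + 1) (n + l) := ⟨n, hb, hstep, not_le.1 hc⟩
      refine le_add_left ?_
      calc reward q g x (n + l) u
          = {v | LadderBelow (y - x) v (m + 1) (n + l)}.indicator (reward q g x (n + l)) u :=
            (Set.indicator_of_mem (s := {v | LadderBelow (y - x) v (m + 1) (n + l)}) hbelow _).symm
        _ ≤ _ := ENNReal.le_tsum (f := fun k =>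
            {v | LadderBelow (y - x) v (m + 1) k}.indicator (reward q g x k) u) _

end Rewards

lemma pairwise_disjoint_crossSet (x y : ℝ) : Pairwise (Function.onFun Disjoint (crossSet x y)) :=
  fun _ _ hne => Set.disjoint_left.2 fun _ ⟨_, h₁⟩ ⟨_, h₂⟩ => hne (h₁.index_unique h₂)

lemma measurableSet_crossSet (x y : ℝ) (m : ℕ) : MeasurableSet (crossSet x y m) :=
  (Measurable.exists fun n => measurable_ladderCross (y - x) m n).setOf

def largeIncrements (N : ℕ) (δ : ℝ) : Set (ℕ → ℝ) :=
  (Finset.range N : Set ℕ).pi fun _ => Set.Ici δ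

lemma measurableSet_largeIncrements (N : ℕ) (δ : ℝ) : MeasurableSet (largeIncrements N δ) :=
  MeasurableSet.pi (Finset.countable_toSet _) fun _ _ => measurableSet_Ici

section Values

variable (ν : Measure ℝ)

local notation "P" => Measure.infinitePi fun _ : ℕ => ν

variable {q : ℝ} {g : ℝ → ℝ} {x y w : ℝ} {m n : ℕ}

def ladderValue (q : ℝ) (g : ℝ → ℝ) (w : ℝ) : ℝ≥0∞ :=
  ∫⁻ u, payoff q g (seqWalk w) firstLadderEpoch u ∂P

/-- The value of stopping at the `m`-th ladder epoch if all ladder heights up to it are below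
`y - x`, and `0` otherwise: at most one term of the sum is nonzero. -/
def belowValue (q : ℝ) (g : ℝ → ℝ) (x y : ℝ) (m : ℕ) : ℝ≥0∞ :=
  ∫⁻ u, ∑' n, {v | LadderBelow (y - x) v m n}.indicator (reward q g x n) u ∂P

lemma payoff_mul_le_payoff_mul (hg0 : ∀ x, 0 ≤ g x) (hg : IsLogConcave g) (hwy : w ≤ y)
    (u : ℕ → ℝ) :
    payoff q g (seqWalk y) firstLadderEpoch u * ENNReal.ofReal (g w)
      ≤ payoff q g (seqWalk w) firstLadderEpoch u * ENNReal.ofReal (g y) := by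
  cases hT : firstLadderEpoch u using ENat.recTopCoe with
  | top => simp [payoff, hT]
  | coe n =>
    rw [payoff_seqWalk_of_eq hT, payoff_seqWalk_of_eq hT, reward, reward,
      ← ENNReal.ofReal_mul (mul_nonneg (exp_pos _).le (hg0 _)),
      ← ENNReal.ofReal_mul (mul_nonneg (exp_pos _).le (hg0 _))]
    refine ENNReal.ofReal_le_ofReal ?_
    have hS : 0 ≤ partialSum u n := by simpa [seqWalk] using (hitFrom1_spec hT).2.1
    have := hg.mul_le_mul_of_le hg0 hwy hS
    simp only [seqWalk, mul_assoc]
    gcongr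

lemma ofReal_le_ladderValue (hg0 : ∀ x, 0 ≤ g x) (hmono : Monotone g) (hg : IsLogConcave g)
    (hy : ENNReal.ofReal (g y) ≤ ladderValue ν q g y) (hwy : w ≤ y) :
    ENNReal.ofReal (g w) ≤ ladderValue ν q g w := by
  rcases (hg0 y).eq_or_lt with hgy | hgy
  · simp [le_antisymm (hgy ▸ hmono hwy) (hg0 w)]
  rw [← ENNReal.mul_le_mul_iff_left (ENNReal.ofReal_pos.2 hgy).ne' ENNReal.ofReal_ne_top]
  calc ENNReal.ofReal (g w) * ENNReal.ofReal (g y)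
      ≤ ladderValue ν q g y * ENNReal.ofReal (g w) := by
        rw [mul_comm]
        gcongr
    _ ≤ ladderValue ν q g w * ENNReal.ofReal (g y) := by
        simp only [ladderValue]
        rw [← lintegral_mul_const' _ _ ENNReal.ofReal_ne_top,
          ← lintegral_mul_const' _ _ ENNReal.ofReal_ne_top]
        exact lintegral_mono fun u => payoff_mul_le_payoff_mul hg0 hg hwy u

lemma lintegral_indicator_reward_le_restartReward [IsProbabilityMeasure ν] (hg0 : ∀ x, 0 ≤ g x)
    (hmono : Monotone g) (hg : IsLogConcave g) (hy : ENNReal.ofReal (g y) ≤ ladderValue ν q g y)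
    (m n : ℕ) :
    ∫⁻ u, {v | LadderBelow (y - x) v m n}.indicator (reward q g x n) u ∂P
      ≤ ∫⁻ u, {v | LadderBelow (y - x) v m n}.indicator
          (fun u => restartReward q g x n (u, shift n u)) u ∂P := by
  set B := {v | LadderBelow (y - x) v m n}
  let F : (ℕ → ℝ) → (ℕ → ℝ) → ℝ≥0∞ := fun a b =>
    (Prod.fst ⁻¹' B).indicator (restartReward q g x n) (a, b)
  have hF : Measurable (Function.uncurry F) :=
    (measurable_restartReward hmono.measurable q x n).indicator
      ((measurableSet_ladderBelow _ m n).preimage measurable_fst)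
  have hdep : ∀ b, DependsOn (F · b) (Set.Iio n) := fun b a a' h => by
    have hB : (a ∈ B) = (a' ∈ B) := dependsOn_ladderBelow _ m n h
    have hS : seqWalk x n a = seqWalk x n a' := by
      simp only [seqWalk, partialSum_congr (fun i hi => h i hi) le_rfl]
    by_cases ha : a ∈ B
    · simp only [F, Set.indicator_of_mem (show (a, b) ∈ Prod.fst ⁻¹' B from ha),
        Set.indicator_of_mem (show (a', b) ∈ Prod.fst ⁻¹' B from hB ▸ ha), restartReward, hS]
    · simp only [F, Set.indicator_of_notMem (show (a, b) ∉ Prod.fst ⁻¹' B from ha),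
        Set.indicator_of_notMem (show (a', b) ∉ Prod.fst ⁻¹' B from hB ▸ ha)]
  calc ∫⁻ u, B.indicator (reward q g x n) u ∂P
      ≤ ∫⁻ a, ∫⁻ b, F a b ∂P ∂P := lintegral_mono fun a => by
        by_cases ha : a ∈ B
        · simp only [F, Set.indicator_of_mem ha,
            Set.indicator_of_mem (show (a, _) ∈ Prod.fst ⁻¹' B from ha), restartReward]
          rw [lintegral_const_mul' _ _ ENNReal.ofReal_ne_top, reward,
            ENNReal.ofReal_mul (exp_pos _).le]
          gcongr
          refine ofReal_le_ladderValue ν hg0 hmono hg hy ?_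
          have := ha.partialSum_lt n le_rfl
          simp only [seqWalk]
          linarith
        · simp [F, ha]
    _ = ∫⁻ u, B.indicator (fun u => restartReward q g x n (u, shift n u)) u ∂P := by
      rw [← lintegral_comp_shift ν n hF hdep]
      refine lintegral_congr fun u => ?_
      by_cases hu : u ∈ B
      · simp only [F, Set.indicator_of_mem hu,
          Set.indicator_of_mem (show (u, shift n u) ∈ Prod.fst ⁻¹' B from hu)]
      · simp only [F, Set.indicator_of_notMem hu,
          Set.indicator_of_notMem (show (u, shift n u) ∉ Prod.fst ⁻¹' B from hu)]

lemma belowValue_le [IsProbabilityMeasure ν] (hg0 : ∀ x, 0 ≤ g x) (hmono : Monotone g)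
    (hg : IsLogConcave g) (hy : ENNReal.ofReal (g y) ≤ ladderValue ν q g y) (m : ℕ) :
    belowValue ν q g x y m
      ≤ ∫⁻ u in crossSet x y m, payoff q g (seqWalk x) (hitFrom0 (seqWalk x) y) u ∂P
        + belowValue ν q g x y (m + 1) := by
  have hgm := hmono.measurable
  have hpayoff : Measurable (payoff q g (seqWalk x) (hitFrom0 (seqWalk x) y)) :=
    measurable_payoff hgm (measurable_seqWalk x) (measurable_hitFrom0 (measurable_seqWalk x))
  calc belowValue ν q g x y m
      = ∑' n, ∫⁻ u, {v | LadderBelow (y - x) v m n}.indicator (reward q g x n) u ∂P :=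
        lintegral_tsum fun n =>
          ((measurable_reward hgm q x n).indicator (measurableSet_ladderBelow _ m n)).aemeasurable
    _ ≤ ∑' n, ∫⁻ u, {v | LadderBelow (y - x) v m n}.indicator
          (fun u => restartReward q g x n (u, shift n u)) u ∂P :=
        ENNReal.tsum_le_tsum fun n =>
          lintegral_indicator_reward_le_restartReward ν hg0 hmono hg hy m n
    _ = ∫⁻ u, ∑' n, {v | LadderBelow (y - x) v m n}.indicator
          (fun u => restartReward q g x n (u, shift n u)) u ∂P :=
        (lintegral_tsum fun n => (((measurable_restartReward hgm q x n).comp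
          (measurable_id.prodMk (measurable_shift n))).indicator
          (measurableSet_ladderBelow _ m n)).aemeasurable).symm
    _ ≤ ∫⁻ u, ((crossSet x y m).indicator (payoff q g (seqWalk x) (hitFrom0 (seqWalk x) y)) u
          + ∑' n, {v | LadderBelow (y - x) v (m + 1) n}.indicator (reward q g x n) u) ∂P :=
        lintegral_mono fun u => tsum_indicator_le_of_pairwise_disjoint
          (pairwise_disjoint_ladderBelow _ m) fun _ hn => restartReward_le hn
    _ = _ := by
        rw [lintegral_add_left (hpayoff.indicator (measurableSet_crossSet x y m)),
          lintegral_indicator (measurableSet_crossSet x y m), belowValue]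

lemma ofReal_le_belowValue_zero [IsProbabilityMeasure ν] (hxy : x < y) :
    ENNReal.ofReal (g x) ≤ belowValue ν q g x y 0 := by
  calc ENNReal.ofReal (g x) = ∫⁻ u, reward q g x 0 u ∂P := by simp [reward, seqWalk]
    _ ≤ belowValue ν q g x y 0 := lintegral_mono fun u =>
      (Set.indicator_of_mem (s := {v | LadderBelow (y - x) v 0 0}) ⟨rfl, sub_pos.2 hxy⟩
        (reward q g x 0)).symm.le.trans
        (ENNReal.le_tsum (f := fun n =>
          {v | LadderBelow (y - x) v 0 n}.indicator (reward q g x n) u) 0)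

lemma sum_setLIntegral_crossSet_le (f : (ℕ → ℝ) → ℝ≥0∞) (M : ℕ) :
    ∑ k ∈ Finset.range M, ∫⁻ u in crossSet x y k, f u ∂P ≤ ∫⁻ u, f u ∂P :=
  calc ∑ k ∈ Finset.range M, ∫⁻ u in crossSet x y k, f u ∂P
      ≤ ∑' k, ∫⁻ u in crossSet x y k, f u ∂P := ENNReal.sum_le_tsum _
    _ = ∫⁻ u in ⋃ k, crossSet x y k, f u ∂P :=
      (lintegral_iUnion (measurableSet_crossSet x y) (pairwise_disjoint_crossSet x y) f).symm
    _ ≤ ∫⁻ u, f u ∂P := setLIntegral_le_lintegral _ _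

lemma ofReal_le_add_belowValue [IsProbabilityMeasure ν] (hg0 : ∀ x, 0 ≤ g x)
    (hmono : Monotone g) (hg : IsLogConcave g) (hy : ENNReal.ofReal (g y) ≤ ladderValue ν q g y)
    (hxy : x < y) (M : ℕ) :
    ENNReal.ofReal (g x)
      ≤ ∫⁻ u, payoff q g (seqWalk x) (hitFrom0 (seqWalk x) y) u ∂P + belowValue ν q g x y M := by
  refine le_trans ?_ (add_le_add_left (sum_setLIntegral_crossSet_le ν (x := x) (y := y) _ M) _)
  induction M with
  | zero => simpa using ofReal_le_belowValue_zero ν hxy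
  | succ M ih =>
    rw [Finset.sum_range_succ, add_assoc]
    exact ih.trans (add_le_add_right (belowValue_le ν hg0 hmono hg hy M) _)

lemma belowValue_le_mul (hq : 0 ≤ q) (hg0 : ∀ x, 0 ≤ g x) (hmono : Monotone g) (m : ℕ) :
    belowValue ν q g x y m ≤ ENNReal.ofReal (g y) * P {u | ∃ n, LadderBelow (y - x) u m n} := by
  calc belowValue ν q g x y m
      = ∑' n, ∫⁻ u, {v | LadderBelow (y - x) v m n}.indicator (reward q g x n) u ∂P :=
        lintegral_tsum fun n => ((measurable_reward hmono.measurable q x n).indicator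
          (measurableSet_ladderBelow _ m n)).aemeasurable
    _ ≤ ∑' n, ∫⁻ u, {v | LadderBelow (y - x) v m n}.indicator
          (fun _ => ENNReal.ofReal (g y)) u ∂P :=
        ENNReal.tsum_le_tsum fun n => lintegral_mono fun u =>
          Set.indicator_le_indicator' fun hu => reward_le_of_ladderBelow hq hg0 hmono hu
    _ = ENNReal.ofReal (g y) * P {u | ∃ n, LadderBelow (y - x) u m n} := by
        simp_rw [lintegral_indicator_const (measurableSet_ladderBelow _ m _)]
        rw [ENNReal.tsum_mul_left, Set.ofPred_exists,
          measure_iUnion (pairwise_disjoint_ladderBelow _ m) (measurableSet_ladderBelow _ m)]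

lemma measure_exists_ladderBelow_add_le [IsProbabilityMeasure ν] {c δ : ℝ} (hδ : 0 < δ)
    {N : ℕ} (hN : c ≤ N * δ) (m : ℕ) :
    P {u | ∃ n, LadderBelow c u (m + N) n}
      ≤ P (largeIncrements N δ)ᶜ * P {u | ∃ n, LadderBelow c u m n} := by
  calc P {u | ∃ n, LadderBelow c u (m + N) n}
      ≤ P (⋃ n, {u | LadderBelow c u m n} ∩ shift n ⁻¹' (largeIncrements N δ)ᶜ) :=
        measure_mono fun u ⟨_, h⟩ => by
          obtain ⟨n, hn, j, hj, hu⟩ := h.exists_small_increment hδ hN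
          exact Set.mem_iUnion.2 ⟨n, hn, fun hD => (hD j (by simpa using hj)).not_gt hu⟩
    _ ≤ ∑' n, P ({u | LadderBelow c u m n} ∩ shift n ⁻¹' (largeIncrements N δ)ᶜ) :=
        measure_iUnion_le _
    _ = ∑' n, P {u | LadderBelow c u m n} * P (largeIncrements N δ)ᶜ := tsum_congr fun n =>
        measure_inter_shift_preimage ν n (measurableSet_ladderBelow c m n)
          (measurableSet_largeIncrements N δ).compl (dependsOn_ladderBelow c m n)
    _ = P (largeIncrements N δ)ᶜ * P {u | ∃ n, LadderBelow c u m n} := by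
        rw [ENNReal.tsum_mul_right, mul_comm, Set.ofPred_exists,
          measure_iUnion (pairwise_disjoint_ladderBelow c m) (measurableSet_ladderBelow c m)]

lemma measure_exists_ladderBelow_mul_le [IsProbabilityMeasure ν] {c δ : ℝ} (hδ : 0 < δ)
    {N : ℕ} (hN : c ≤ N * δ) (j : ℕ) :
    P {u | ∃ n, LadderBelow c u (N * j) n} ≤ P (largeIncrements N δ)ᶜ ^ j := by
  induction j with
  | zero => exact prob_le_one.trans_eq (pow_zero _).symm
  | succ j ih =>
    rw [Nat.mul_succ, pow_succ']
    exact (measure_exists_ladderBelow_add_le ν hδ hN _).trans (mul_le_mul_right ih _)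

lemma measure_largeIncrements_compl_lt_one [IsProbabilityMeasure ν] {δ : ℝ}
    (hν : 0 < ν (Set.Ici δ)) (N : ℕ) : P (largeIncrements N δ)ᶜ < 1 := by
  rw [prob_compl_eq_one_sub (measurableSet_largeIncrements N δ), largeIncrements,
    Measure.infinitePi_pi _ fun _ _ => measurableSet_Ici, Finset.prod_const, Finset.card_range]
  exact ENNReal.sub_lt_self ENNReal.one_ne_top one_ne_zero (pow_ne_zero _ hν.ne')

lemma exists_pos_measure_Ici_of_pos_measure_Ioi (h : 0 < ν (Set.Ioi 0)) :
    ∃ δ > 0, 0 < ν (Set.Ici δ) := by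
  by_contra! hδ
  rw [← iUnion_Ici_eq_Ioi_of_lt_of_tendsto (fun n : ℕ => Nat.one_div_pos_of_nat)
    tendsto_one_div_add_atTop_nhds_zero_nat] at h
  exact h.ne' (measure_iUnion_null fun n => nonpos_iff_eq_zero.1 (hδ _ Nat.one_div_pos_of_nat))

theorem ofReal_le_lintegral_payoff_hitFrom0 [IsProbabilityMeasure ν] (hν : 0 < ν (Set.Ioi 0))
    (hq : 0 ≤ q) (hg0 : ∀ x, 0 ≤ g x) (hmono : Monotone g) (hg : IsLogConcave g)
    (hy : ENNReal.ofReal (g y) ≤ ladderValue ν q g y) (hxy : x < y) :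
    ENNReal.ofReal (g x) ≤ ∫⁻ u, payoff q g (seqWalk x) (hitFrom0 (seqWalk x) y) u ∂P := by
  obtain ⟨δ, hδ, hνδ⟩ := exists_pos_measure_Ici_of_pos_measure_Ioi ν hν
  obtain ⟨N, hN⟩ : ∃ N : ℕ, y - x ≤ N * δ :=
    ⟨⌈(y - x) / δ⌉₊, (div_le_iff₀ hδ).1 (Nat.le_ceil _)⟩
  set V := ∫⁻ u, payoff q g (seqWalk x) (hitFrom0 (seqWalk x) y) u ∂P
  set r := P (largeIncrements N δ)ᶜ
  have hbound (j : ℕ) : ENNReal.ofReal (g x) ≤ V + ENNReal.ofReal (g y) * r ^ j :=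
    (ofReal_le_add_belowValue ν hg0 hmono hg hy hxy (N * j)).trans <| add_le_add_right
      ((belowValue_le_mul ν hq hg0 hmono _).trans
        (mul_le_mul_right (measure_exists_ladderBelow_mul_le ν hδ hN j) _)) _
  have hlim : Filter.Tendsto (fun j => V + ENNReal.ofReal (g y) * r ^ j) Filter.atTop
      (nhds V) := by
    have := (tendsto_const_nhds (x := V)).add <| ENNReal.Tendsto.const_mul
      (ENNReal.tendsto_pow_atTop_nhds_zero_of_lt_one (measure_largeIncrements_compl_lt_one ν hνδ N))
      (Or.inr (ENNReal.ofReal_ne_top (r := g y)))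
    rwa [mul_zero, add_zero] at this
  exact ge_of_tendsto' hlim hbound

end Values

lemma lintegral_comp_increments [MeasurableSpace Ω] {μ : Measure Ω} [IsProbabilityMeasure μ]
    {ξ : ℕ → Ω → ℝ} (hmeas : ∀ i, Measurable (ξ i)) (hindep : iIndepFun ξ μ)
    (hident : ∀ i, μ.map (ξ i) = μ.map (ξ 1)) {F : (ℕ → ℝ) → ℝ≥0∞} (hF : Measurable F) :
    ∫⁻ ω, F (fun i => ξ (i + 1) ω) ∂μ
      = ∫⁻ u, F u ∂Measure.infinitePi fun _ : ℕ => μ.map (ξ 1) := by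
  rw [← lintegral_map hF (measurable_pi_lambda _ fun i => hmeas (i + 1)),
    (hindep.precomp (add_left_injective 1)).map_fun_eq_infinitePi_map fun i => hmeas (i + 1)]
  simp only [hident]

end RandomWalk

end

open RandomWalk in
theorem stmt9_general [MeasurableSpace Ω] (μ : Measure Ω) [IsProbabilityMeasure μ]
    (ξ : ℕ → Ω → ℝ) (hmeas : ∀ i, Measurable (ξ i))
    (hindep : iIndepFun ξ μ)
    (hident : ∀ i, μ.map (ξ i) = μ.map (ξ 1))
    (hξpos : 0 < μ {ω | 0 < ξ 1 ω})
    (q : ℝ) (hq : 0 ≤ q)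
    (g : ℝ → ℝ) (hg0 : ∀ x, 0 ≤ g x)
    (hgmono : Monotone g)
    (hglc : ∀ a b θ : ℝ, 0 < θ → θ < 1 →
      g a ^ θ * g b ^ (1 - θ) ≤ g (θ * a + (1 - θ) * b))
    (y : ℝ)
    (hcont : ENNReal.ofReal (g y)
      ≤ ∫⁻ ω, payoff q g (walk y ξ) (hitFrom1 (walk y ξ) y) ω ∂μ) :
    ∀ x : ℝ, x < y →
      ENNReal.ofReal (g x)
        ≤ ∫⁻ ω, payoff q g (walk x ξ) (hitFrom0 (walk x ξ) y) ω ∂μ := by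
  intro x hxy
  have hgm := hgmono.measurable
  have : IsProbabilityMeasure (μ.map (ξ 1)) :=
    Measure.isProbabilityMeasure_map (hmeas 1).aemeasurable
  have hν : 0 < μ.map (ξ 1) (Set.Ioi 0) := by
    rwa [Measure.map_apply (hmeas 1) measurableSet_Ioi]
  have hy : ENNReal.ofReal (g y) ≤ ladderValue (μ.map (ξ 1)) q g y := by
    rw [ladderValue, ← hitFrom1_seqWalk_self y, ← lintegral_comp_increments hmeas hindep hident
      (measurable_payoff hgm (measurable_seqWalk y) (measurable_hitFrom1 (measurable_seqWalk y)))]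
    exact hcont
  exact (ofReal_le_lintegral_payoff_hitFrom0 _ hν hq hg0 hgmono hglc hy hxy).trans_eq
    (lintegral_comp_increments hmeas hindep hident (measurable_payoff hgm (measurable_seqWalk x)
      (measurable_hitFrom0 (measurable_seqWalk x)))).symm

/-- Lemma 2.3(ii): random walk with `P(ξ>0)>0`, `q ≥ 0`, and `g`
nonnegative, nonconstant, nondecreasing, logconcave. If
`E_y[e^{-qT_y} g(X_{T_y}) 1_{T_y<∞}] ≥ g(y)` for some `y` above
`x₀ = inf {s : g s > 0}` (i.e. `∃ s < y, g s > 0`), then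
`g(x) ≤ E_x[e^{-qτ_y} g(X_{τ_y}) 1_{τ_y<∞}]` for all `x < y`. -/
theorem stmt9 [MeasurableSpace Ω] (μ : Measure Ω) [IsProbabilityMeasure μ]
    (ξ : ℕ → Ω → ℝ) (hmeas : ∀ i, Measurable (ξ i))
    (hindep : iIndepFun ξ μ)
    (hident : ∀ i, μ.map (ξ i) = μ.map (ξ 1))
    (hξpos : 0 < μ {ω | 0 < ξ 1 ω})
    (q : ℝ) (hq : 0 ≤ q)
    (g : ℝ → ℝ) (hg0 : ∀ x, 0 ≤ g x) (hgnc : ∃ a b : ℝ, g a ≠ g b)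
    (hgmono : Monotone g)
    (hglc : ∀ a b θ : ℝ, 0 < θ → θ < 1 →
      g a ^ θ * g b ^ (1 - θ) ≤ g (θ * a + (1 - θ) * b))
    (y : ℝ) (hy : ∃ s : ℝ, s < y ∧ 0 < g s)
    (hcont : ENNReal.ofReal (g y)
      ≤ ∫⁻ ω, payoff q g (walk y ξ) (hitFrom1 (walk y ξ) y) ω ∂μ) :
    ∀ x : ℝ, x < y →
      ENNReal.ofReal (g x)
        ≤ ∫⁻ ω, payoff q g (walk x ξ) (hitFrom0 (walk x ξ) y) ω ∂μ :=
  stmt9_general μ ξ hmeas hindep hident hξpos q hq g hg0 hgmono hglc y hcont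
end

section
/- Let (Xₙ) be a random walk with i.i.d. increments ξ and q ≥ 0 with max{q, β} > 0 where β ≥ 0, and suppose E[e^{βξ}] ≥ e^q. Let T₀ = inf{n ≥ 1 : Xₙ ≥ 0} with X₀ = 0. Then E[e^{-qT₀ + βX_{T₀}} 1_{T₀<∞}] ≥ 1. -/
open MeasureTheory ProbabilityTheory Real

variable {Ω : Type*}

/-!
`Mₙ = e^{-qn + βXₙ}` is a submartingale, since `E[e^{-q + βξ}] ≥ 1`. Splitting
`{T₀ > n} = {T₀ > n + 1} ∪ {T₀ = n + 1}` in `E[Mₙ₊₁; T₀ > n] ≥ E[Mₙ; T₀ > n]` and telescoping from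
`M₀ = 1` gives `1 ≤ E[Mₙ; T₀ > n] + E[M_{T₀}; T₀ ≤ n]`, so it suffices that `E[Mₙ; T₀ > n] → 0`.
On `{T₀ > n}` we have `Xₙ ≤ 0`, hence `Mₙ ≤ e^{-qn + β'Xₙ}` for every `β' ≤ β`, whose mean is
`(e^{-q} E[e^{β'ξ}])ⁿ`. If `q > 0`, take `β' = 0`. If `q = 0` and `E[e^{βξ}] = 1`, take `β' = β/2`:
integrating `(1 - e^{βξ/2})² ≥ 0` gives `E[e^{βξ/2}] < 1` unless `ξ = 0` a.s., in which case
`T₀ = 1` a.s. If `q = 0` and `E[e^{βξ}] > 1`, the hypothesis also holds for some `q' > 0`, and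
the payoff decreases in `q`.
-/

open Filter Topology
open scoped ENNReal

lemma walk_zero (x : ℝ) (ξ : ℕ → Ω → ℝ) (ω : Ω) : walk x ξ 0 ω = x := by
  simp [walk]

lemma walk_succ (x : ℝ) (ξ : ℕ → Ω → ℝ) (n : ℕ) (ω : Ω) :
    walk x ξ (n + 1) ω = walk x ξ n ω + ξ (n + 1) ω := by
  simp only [walk, Finset.sum_range_succ, add_assoc]

lemma lt_hitFrom1_iff {X : ℕ → Ω → ℝ} {v : ℝ} {ω : Ω} {n : ℕ} :
    (n : ℕ∞) < hitFrom1 X v ω ↔ ∀ k, 1 ≤ k → k ≤ n → X k ω < v := by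
  rw [hitFrom1, ← ENat.add_one_le_iff (ENat.natCast_ne_top n)]
  simp only [le_iInf_iff, Set.mem_ofPred_eq, and_imp]
  refine forall_congr' fun k => ⟨fun h hk hkn => ?_, fun h hk hv => ?_⟩
  · by_contra hv
    have := h hk (not_lt.1 hv)
    norm_cast at this
    omega
  · by_contra hlt
    norm_cast at hlt
    exact (h hk (by omega)).not_ge hv

lemma zero_lt_hitFrom1 (X : ℕ → Ω → ℝ) (v : ℝ) (ω : Ω) : 0 < hitFrom1 X v ω := by
  simpa using (lt_hitFrom1_iff (n := 0)).2 fun k hk hk0 => absurd hk (by omega)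

def ltHit (ξ : ℕ → Ω → ℝ) (n : ℕ) : Set Ω := {ω | (n : ℕ∞) < hitFrom1 (walk 0 ξ) 0 ω}

def hitAt (ξ : ℕ → Ω → ℝ) (n : ℕ) : Set Ω := {ω | hitFrom1 (walk 0 ξ) 0 ω = n}

lemma ltHit_zero (ξ : ℕ → Ω → ℝ) : ltHit ξ 0 = Set.univ :=
  Set.eq_univ_of_forall fun ω => by exact_mod_cast zero_lt_hitFrom1 (walk 0 ξ) 0 ω

lemma ltHit_eq_union (ξ : ℕ → Ω → ℝ) (n : ℕ) : ltHit ξ n = ltHit ξ (n + 1) ∪ hitAt ξ (n + 1) := by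
  ext ω
  simp only [ltHit, hitAt, Set.mem_union, Set.mem_ofPred_eq, Nat.cast_succ]
  rw [← ENat.add_one_le_iff (ENat.natCast_ne_top n), le_iff_lt_or_eq, eq_comm]

lemma disjoint_ltHit_hitAt (ξ : ℕ → Ω → ℝ) (n : ℕ) : Disjoint (ltHit ξ n) (hitAt ξ n) :=
  Set.disjoint_left.2 fun _ hlt heq => (ne_of_lt hlt) (Eq.symm heq)

lemma walk_nonpos_of_mem_ltHit {ξ : ℕ → Ω → ℝ} {n : ℕ} {ω : Ω} (h : ω ∈ ltHit ξ n) :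
    walk 0 ξ n ω ≤ 0 := by
  rcases n with _ | n
  · exact (walk_zero 0 ξ ω).le
  · exact (lt_hitFrom1_iff.1 h (n + 1) (by omega) le_rfl).le

noncomputable def expWalk (q β : ℝ) (ξ : ℕ → Ω → ℝ) (n : ℕ) (ω : Ω) : ℝ≥0∞ :=
  ENNReal.ofReal (exp (-q * n + β * walk 0 ξ n ω))

lemma expWalk_zero (q β : ℝ) (ξ : ℕ → Ω → ℝ) (ω : Ω) : expWalk q β ξ 0 ω = 1 := by
  simp [expWalk, walk_zero]

lemma expWalk_succ (q β : ℝ) (ξ : ℕ → Ω → ℝ) (n : ℕ) (ω : Ω) :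
    expWalk q β ξ (n + 1) ω = expWalk q β ξ n ω * ENNReal.ofReal (exp (-q + β * ξ (n + 1) ω)) := by
  rw [expWalk, expWalk, ← ENNReal.ofReal_mul (exp_nonneg _), ← exp_add, walk_succ]
  push_cast
  ring_nf

lemma indicator_ltHit_expWalk_le {q β β' : ℝ} (hβ' : β' ≤ β) (ξ : ℕ → Ω → ℝ) (n : ℕ) (ω : Ω) :
    (ltHit ξ n).indicator (expWalk q β ξ n) ω ≤ expWalk q β' ξ n ω := by
  by_cases h : ω ∈ ltHit ξ n
  · rw [Set.indicator_of_mem h]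
    refine ENNReal.ofReal_le_ofReal (exp_le_exp.2 ?_)
    nlinarith [walk_nonpos_of_mem_ltHit h]
  · simp [Set.indicator_of_notMem h]

lemma payoff_eq_tsum (q β : ℝ) (ξ : ℕ → Ω → ℝ) (ω : Ω) :
    payoff q (fun z => exp (β * z)) (walk 0 ξ) (hitFrom1 (walk 0 ξ) 0) ω
      = ∑' n, (hitAt ξ (n + 1)).indicator (expWalk q β ξ (n + 1)) ω := by
  by_cases htop : hitFrom1 (walk 0 ξ) 0 ω = ⊤
  · simp [payoff, hitAt, htop, eq_comm (a := ⊤)]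
  obtain ⟨m, hm⟩ := ENat.ne_top_iff_exists.1 htop
  have hpos := zero_lt_hitFrom1 (walk 0 ξ) 0 ω
  rw [← hm, Nat.cast_pos] at hpos
  obtain ⟨k, rfl⟩ := Nat.exists_eq_add_one_of_ne_zero hpos.ne'
  rw [tsum_eq_single k fun n hn => Set.indicator_of_notMem (by simp [hitAt, ← hm]; omega) _,
    Set.indicator_of_mem (by simp [hitAt, ← hm]), payoff, if_neg htop, ← hm,
    ENat.toNat_natCast, expWalk, exp_add]

lemma payoff_le_payoff_of_le {q q' : ℝ} (hq : q' ≤ q) {g : ℝ → ℝ} (hg : ∀ z, 0 ≤ g z)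
    (X : ℕ → Ω → ℝ) (τ : Ω → ℕ∞) (ω : Ω) : payoff q g X τ ω ≤ payoff q' g X τ ω := by
  unfold payoff
  split_ifs
  · rfl
  · exact ENNReal.ofReal_le_ofReal (mul_le_mul_of_nonneg_right
      (exp_le_exp.2 (mul_le_mul_of_nonneg_right (neg_le_neg hq) (Nat.cast_nonneg _))) (hg _))

lemma ENNReal.le_tsum_of_le_add_succ {a g : ℕ → ℝ≥0∞} (h : ∀ n, a n ≤ a (n + 1) + g n)
    (ha : Tendsto a atTop (𝓝 0)) : a 0 ≤ ∑' n, g n := by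
  have key : ∀ n, a 0 ≤ a n + ∑ k ∈ Finset.range n, g k := by
    intro n
    induction n with
    | zero => simp
    | succ n ih =>
      calc a 0 ≤ a n + ∑ k ∈ Finset.range n, g k := ih
        _ ≤ a (n + 1) + g n + ∑ k ∈ Finset.range n, g k := by gcongr; exact h n
        _ = a (n + 1) + ∑ k ∈ Finset.range (n + 1), g k := by rw [Finset.sum_range_succ]; ring
  simpa using ge_of_tendsto' (ha.add_const (∑' n, g n))
    fun n => (key n).trans (by gcongr; exact ENNReal.sum_le_tsum _)

lemma exists_pos_ofReal_exp_le {a : ℝ≥0∞} (ha : 1 < a) :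
    ∃ r : ℝ, 0 < r ∧ ENNReal.ofReal (exp r) ≤ a := by
  obtain ⟨s, -, h1s, hsa⟩ := ENNReal.lt_iff_exists_real_btwn.1 ha
  have hs : 1 < s := ENNReal.one_lt_ofReal.1 h1s
  exact ⟨log s, log_pos hs, by rw [exp_log (by linarith)]; exact hsa.le⟩

def incrSigma (ξ : ℕ → Ω → ℝ) (n : ℕ) : MeasurableSpace Ω :=
  ⨆ i ∈ Set.Icc 1 n, MeasurableSpace.comap (ξ i) inferInstance

lemma measurable_walk_incrSigma {ξ : ℕ → Ω → ℝ} (x : ℝ) {k n : ℕ} (hkn : k ≤ n) :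
    Measurable[incrSigma ξ n] (walk x ξ k) := by
  refine measurable_const.add (Finset.measurable_sum _ fun i hi => ?_)
  have hi : i + 1 ∈ Set.Icc 1 n := ⟨by omega, by have := Finset.mem_range.1 hi; omega⟩
  exact Measurable.of_comap_le (le_iSup₂ (f := fun i (_ : i ∈ Set.Icc 1 n) =>
    MeasurableSpace.comap (ξ i) inferInstance) (i + 1) hi)

lemma measurableSet_ltHit_incrSigma (ξ : ℕ → Ω → ℝ) (n : ℕ) :
    MeasurableSet[incrSigma ξ n] (ltHit ξ n) := by
  simp only [ltHit, lt_hitFrom1_iff, Set.ofPred_forall]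
  exact MeasurableSet.iInter fun k => MeasurableSet.iInter fun _ => MeasurableSet.iInter fun hkn =>
    measurableSet_lt (measurable_walk_incrSigma 0 hkn) measurable_const

lemma measurable_expWalk_incrSigma (q β : ℝ) (ξ : ℕ → Ω → ℝ) (n : ℕ) :
    Measurable[incrSigma ξ n] (expWalk q β ξ n) :=
  (measurable_const.add ((measurable_walk_incrSigma 0 le_rfl).const_mul β)).exp.ennreal_ofReal

section Probability

variable [MeasurableSpace Ω] {μ : Measure Ω} {ξ : ℕ → Ω → ℝ}

lemma incrSigma_le (hmeas : ∀ i, Measurable (ξ i)) (n : ℕ) :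
    incrSigma ξ n ≤ ‹MeasurableSpace Ω› :=
  iSup₂_le fun i _ => (hmeas i).comap_le

lemma indep_incrSigma_succ (hmeas : ∀ i, Measurable (ξ i)) (hindep : iIndepFun ξ μ) (n : ℕ) :
    Indep (incrSigma ξ n) (MeasurableSpace.comap (ξ (n + 1)) inferInstance) μ := by
  simpa [incrSigma] using indep_iSup_of_disjoint (fun i => (hmeas i).comap_le) hindep
    (S := Set.Icc 1 n) (T := {n + 1}) (by simp)

lemma measurableSet_ltHit (hmeas : ∀ i, Measurable (ξ i)) (n : ℕ) : MeasurableSet (ltHit ξ n) :=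
  incrSigma_le hmeas n _ (measurableSet_ltHit_incrSigma ξ n)

lemma measurableSet_hitAt_succ (hmeas : ∀ i, Measurable (ξ i)) (n : ℕ) :
    MeasurableSet (hitAt ξ (n + 1)) := by
  have : hitAt ξ (n + 1) = ltHit ξ n \ ltHit ξ (n + 1) := by
    rw [ltHit_eq_union ξ n,
      Set.union_sdiff_cancel_left (Set.disjoint_iff.1 (disjoint_ltHit_hitAt ξ _))]
  rw [this]
  exact (measurableSet_ltHit hmeas n).diff (measurableSet_ltHit hmeas (n + 1))

lemma measurable_expWalk (hmeas : ∀ i, Measurable (ξ i)) (q β : ℝ) (n : ℕ) :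
    Measurable (expWalk q β ξ n) :=
  (measurable_expWalk_incrSigma q β ξ n).mono (incrSigma_le hmeas n) le_rfl

noncomputable def expMoment (μ : Measure Ω) (β : ℝ) (Y : Ω → ℝ) : ℝ≥0∞ :=
  ∫⁻ ω, ENNReal.ofReal (exp (β * Y ω)) ∂μ

lemma expMoment_zero [IsProbabilityMeasure μ] (Y : Ω → ℝ) : expMoment μ 0 Y = 1 := by
  simp [expMoment]

lemma lintegral_mul_ofReal_exp_succ (hmeas : ∀ i, Measurable (ξ i)) (hindep : iIndepFun ξ μ)
    (hident : ∀ i, μ.map (ξ i) = μ.map (ξ 1)) {n : ℕ} {f : Ω → ℝ≥0∞}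
    (hf : Measurable[incrSigma ξ n] f) (c β : ℝ) :
    ∫⁻ ω, f ω * ENNReal.ofReal (exp (c + β * ξ (n + 1) ω)) ∂μ
      = (∫⁻ ω, f ω ∂μ) * (ENNReal.ofReal (exp c) * expMoment μ β (ξ 1)) := by
  have hg : Measurable fun x : ℝ => ENNReal.ofReal (exp (c + β * x)) := by fun_prop
  rw [lintegral_mul_eq_lintegral_mul_lintegral_of_independent_measurableSpace
    (g := fun ω => ENNReal.ofReal (exp (c + β * ξ (n + 1) ω)))
    (incrSigma_le hmeas n) (hmeas (n + 1)).comap_le (indep_incrSigma_succ hmeas hindep n) hf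
    (hg.comp (comap_measurable (ξ (n + 1)))), ← lintegral_map hg (hmeas (n + 1)), hident,
    lintegral_map hg (hmeas 1), expMoment]
  congr 1
  simp_rw [exp_add, ENNReal.ofReal_mul (exp_nonneg c)]
  exact lintegral_const_mul _ (by fun_prop)

lemma lintegral_expWalk [IsProbabilityMeasure μ] (hmeas : ∀ i, Measurable (ξ i))
    (hindep : iIndepFun ξ μ) (hident : ∀ i, μ.map (ξ i) = μ.map (ξ 1)) (q β : ℝ) (n : ℕ) :
    ∫⁻ ω, expWalk q β ξ n ω ∂μ = (ENNReal.ofReal (exp (-q)) * expMoment μ β (ξ 1)) ^ n := by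
  induction n with
  | zero => simp [expWalk_zero]
  | succ n ih =>
    simp_rw [expWalk_succ]
    rw [lintegral_mul_ofReal_exp_succ hmeas hindep hident
      (measurable_expWalk_incrSigma q β ξ n), ih, pow_succ]

lemma lintegral_indicator_ltHit_le_succ (hmeas : ∀ i, Measurable (ξ i)) (hindep : iIndepFun ξ μ)
    (hident : ∀ i, μ.map (ξ i) = μ.map (ξ 1)) {q β : ℝ}
    (hsub : ENNReal.ofReal (exp q) ≤ expMoment μ β (ξ 1)) (n : ℕ) :
    ∫⁻ ω, (ltHit ξ n).indicator (expWalk q β ξ n) ω ∂μ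
      ≤ ∫⁻ ω, (ltHit ξ (n + 1)).indicator (expWalk q β ξ (n + 1)) ω ∂μ
        + ∫⁻ ω, (hitAt ξ (n + 1)).indicator (expWalk q β ξ (n + 1)) ω ∂μ := by
  have hgrowth : 1 ≤ ENNReal.ofReal (exp (-q)) * expMoment μ β (ξ 1) :=
    calc 1 = ENNReal.ofReal (exp (-q)) * ENNReal.ofReal (exp q) := by
          rw [← ENNReal.ofReal_mul (exp_nonneg _), ← exp_add, neg_add_cancel, exp_zero,
            ENNReal.ofReal_one]
      _ ≤ _ := by gcongr
  have hf := (measurable_expWalk_incrSigma q β ξ n).indicator (measurableSet_ltHit_incrSigma ξ n)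
  calc ∫⁻ ω, (ltHit ξ n).indicator (expWalk q β ξ n) ω ∂μ
      ≤ (∫⁻ ω, (ltHit ξ n).indicator (expWalk q β ξ n) ω ∂μ)
          * (ENNReal.ofReal (exp (-q)) * expMoment μ β (ξ 1)) := le_mul_of_one_le_right' hgrowth
    _ = ∫⁻ ω, (ltHit ξ n).indicator (expWalk q β ξ (n + 1)) ω ∂μ := by
        rw [← lintegral_mul_ofReal_exp_succ hmeas hindep hident hf]
        refine lintegral_congr fun ω => ?_
        by_cases hω : ω ∈ ltHit ξ n
        · rw [Set.indicator_of_mem hω, Set.indicator_of_mem hω, expWalk_succ]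
        · rw [Set.indicator_of_notMem hω, Set.indicator_of_notMem hω, zero_mul]
    _ = _ := by
        rw [ltHit_eq_union, Set.indicator_union_of_disjoint (disjoint_ltHit_hitAt ξ (n + 1)),
          lintegral_add_left ((measurable_expWalk hmeas q β (n + 1)).indicator
            (measurableSet_ltHit hmeas (n + 1)))]

lemma lintegral_payoff_eq_tsum (hmeas : ∀ i, Measurable (ξ i)) (q β : ℝ) :
    ∫⁻ ω, payoff q (fun z => exp (β * z)) (walk 0 ξ) (hitFrom1 (walk 0 ξ) 0) ω ∂μ
      = ∑' n, ∫⁻ ω, (hitAt ξ (n + 1)).indicator (expWalk q β ξ (n + 1)) ω ∂μ := by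
  simp_rw [payoff_eq_tsum]
  exact lintegral_tsum fun n => ((measurable_expWalk hmeas q β (n + 1)).indicator
    (measurableSet_hitAt_succ hmeas n)).aemeasurable

theorem one_le_lintegral_payoff [IsProbabilityMeasure μ] (hmeas : ∀ i, Measurable (ξ i))
    (hindep : iIndepFun ξ μ) (hident : ∀ i, μ.map (ξ i) = μ.map (ξ 1)) {q β : ℝ}
    (hsub : ENNReal.ofReal (exp q) ≤ expMoment μ β (ξ 1))
    (hvan : Tendsto (fun n => ∫⁻ ω, (ltHit ξ n).indicator (expWalk q β ξ n) ω ∂μ) atTop (𝓝 0)) :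
    1 ≤ ∫⁻ ω, payoff q (fun z => exp (β * z)) (walk 0 ξ) (hitFrom1 (walk 0 ξ) 0) ω ∂μ := by
  rw [lintegral_payoff_eq_tsum hmeas]
  calc 1 = ∫⁻ ω, (ltHit ξ 0).indicator (expWalk q β ξ 0) ω ∂μ := by
        simp [ltHit_zero, expWalk_zero]
    _ ≤ _ := ENNReal.le_tsum_of_le_add_succ
        (lintegral_indicator_ltHit_le_succ hmeas hindep hident hsub) hvan

lemma tendsto_lintegral_indicator_ltHit_of_lt_one [IsProbabilityMeasure μ]
    (hmeas : ∀ i, Measurable (ξ i)) (hindep : iIndepFun ξ μ)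
    (hident : ∀ i, μ.map (ξ i) = μ.map (ξ 1)) {q β β' : ℝ} (hβ' : β' ≤ β)
    (hlt : ENNReal.ofReal (exp (-q)) * expMoment μ β' (ξ 1) < 1) :
    Tendsto (fun n => ∫⁻ ω, (ltHit ξ n).indicator (expWalk q β ξ n) ω ∂μ) atTop (𝓝 0) := by
  refine tendsto_of_tendsto_of_tendsto_of_le_of_le tendsto_const_nhds
    (ENNReal.tendsto_pow_atTop_nhds_zero_of_lt_one hlt) (fun n => zero_le) fun n => ?_
  rw [← lintegral_expWalk hmeas hindep hident]
  exact lintegral_mono (indicator_ltHit_expWalk_le hβ' ξ n)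

lemma tendsto_lintegral_indicator_ltHit_of_ae_eq_zero (hmeas : ∀ i, Measurable (ξ i))
    (h : ξ 1 =ᵐ[μ] 0) (q β : ℝ) :
    Tendsto (fun n => ∫⁻ ω, (ltHit ξ n).indicator (expWalk q β ξ n) ω ∂μ) atTop (𝓝 0) := by
  refine tendsto_const_nhds.congr' ?_
  filter_upwards [eventually_ge_atTop 1] with n hn
  rw [lintegral_indicator (measurableSet_ltHit hmeas n), setLIntegral_measure_zero]
  refine measure_mono_null (fun ω hω => ?_) (ae_iff.1 h)
  have := lt_hitFrom1_iff.1 hω 1 le_rfl hn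
  simp only [walk, Finset.range_one, Finset.sum_singleton, zero_add] at this
  exact this.ne

lemma expMoment_half_lt_one_or_ae_eq_zero [IsProbabilityMeasure μ] {Y : Ω → ℝ}
    (hY : Measurable Y) {β : ℝ} (hβ : 0 < β) (h : expMoment μ β Y = 1) :
    expMoment μ (β / 2) Y < 1 ∨ Y =ᵐ[μ] 0 := by
  refine or_iff_not_imp_left.2 fun hge => ?_
  have hpt : ∀ ω, ENNReal.ofReal ((1 - exp (β / 2 * Y ω)) ^ 2)
      + 2 * ENNReal.ofReal (exp (β / 2 * Y ω)) = 1 + ENNReal.ofReal (exp (β * Y ω)) := by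
    intro ω
    have hsq : exp (β * Y ω) = exp (β / 2 * Y ω) ^ 2 := by rw [← exp_nat_mul]; ring_nf
    rw [hsq, ← ENNReal.ofReal_ofNat 2, ← ENNReal.ofReal_mul (by norm_num),
      ← ENNReal.ofReal_add (sq_nonneg _) (by positivity), ← ENNReal.ofReal_one,
      ← ENNReal.ofReal_add zero_le_one (sq_nonneg _)]
    ring_nf
  have hsum : ∫⁻ ω, ENNReal.ofReal ((1 - exp (β / 2 * Y ω)) ^ 2) ∂μ
      + 2 * expMoment μ (β / 2) Y = 0 + 2 := by
    rw [expMoment, ← lintegral_const_mul _ (by fun_prop), ← lintegral_add_left (by fun_prop),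
      lintegral_congr fun ω => hpt ω, lintegral_add_left measurable_const, ← expMoment, h]
    norm_num
  have hzero : ∫⁻ ω, ENNReal.ofReal ((1 - exp (β / 2 * Y ω)) ^ 2) ∂μ = 0 := by
    refine nonpos_iff_eq_zero.1 (ENNReal.le_of_add_le_add_right (a := 2) ENNReal.ofNat_ne_top ?_)
    calc _ ≤ ∫⁻ ω, ENNReal.ofReal ((1 - exp (β / 2 * Y ω)) ^ 2) ∂μ
          + 2 * expMoment μ (β / 2) Y := by gcongr; exact le_mul_of_one_le_right' (not_lt.1 hge)
      _ = 0 + 2 := hsum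
  filter_upwards [(lintegral_eq_zero_iff (by fun_prop)).1 hzero] with ω hω
  have hexp : exp (β / 2 * Y ω) = 1 := by
    nlinarith [ENNReal.ofReal_eq_zero.1 hω, sq_nonneg (1 - exp (β / 2 * Y ω))]
  have := exp_eq_one_iff _ |>.1 hexp
  simp only [Pi.zero_apply]
  nlinarith

theorem one_le_lintegral_payoff_of_pos [IsProbabilityMeasure μ] (hmeas : ∀ i, Measurable (ξ i))
    (hindep : iIndepFun ξ μ) (hident : ∀ i, μ.map (ξ i) = μ.map (ξ 1)) {q β : ℝ} (hq : 0 < q)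
    (hβ : 0 ≤ β) (hsub : ENNReal.ofReal (exp q) ≤ expMoment μ β (ξ 1)) :
    1 ≤ ∫⁻ ω, payoff q (fun z => exp (β * z)) (walk 0 ξ) (hitFrom1 (walk 0 ξ) 0) ω ∂μ := by
  refine one_le_lintegral_payoff hmeas hindep hident hsub
    (tendsto_lintegral_indicator_ltHit_of_lt_one hmeas hindep hident hβ ?_)
  rw [expMoment_zero, mul_one, ENNReal.ofReal_lt_one, Real.exp_lt_one_iff, neg_lt_zero]
  exact hq

end Probability

/-- random walk started at `0` with i.i.d. increments `ξ`,
`q, β ≥ 0` with `max {q, β} > 0` and `E[e^{βξ}] ≥ e^q`. Then with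
`T₀ = inf {n ≥ 1 : Xₙ ≥ 0}`, `E[e^{-qT₀ + βX_{T₀}} 1_{T₀<∞}] ≥ 1`. -/
theorem stmt12 [MeasurableSpace Ω] (μ : Measure Ω) [IsProbabilityMeasure μ]
    (ξ : ℕ → Ω → ℝ) (hmeas : ∀ i, Measurable (ξ i))
    (hindep : iIndepFun ξ μ)
    (hident : ∀ i, μ.map (ξ i) = μ.map (ξ 1))
    (q β : ℝ) (hq : 0 ≤ q) (hβ : 0 ≤ β) (hqβ : 0 < max q β)
    (hsub : ENNReal.ofReal (Real.exp q)
      ≤ ∫⁻ ω, ENNReal.ofReal (Real.exp (β * ξ 1 ω)) ∂μ) :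
    1 ≤ ∫⁻ ω, payoff q (fun z => Real.exp (β * z)) (walk 0 ξ)
          (hitFrom1 (walk 0 ξ) 0) ω ∂μ := by
  rcases hq.lt_or_eq with hq | rfl
  · exact one_le_lintegral_payoff_of_pos hmeas hindep hident hq hβ hsub
  have hβ : 0 < β := by simpa using hqβ
  have hmoment : 1 ≤ expMoment μ β (ξ 1) := by simpa [expMoment] using hsub
  rcases hmoment.lt_or_eq with hgt | heq
  · obtain ⟨q, hq, hq_sub⟩ := exists_pos_ofReal_exp_le hgt
    exact (one_le_lintegral_payoff_of_pos hmeas hindep hident hq hβ.le hq_sub).trans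
      (lintegral_mono fun ω => payoff_le_payoff_of_le hq.le (fun z => (exp_pos _).le) _ _ ω)
  refine one_le_lintegral_payoff hmeas hindep hident hsub ?_
  rcases expMoment_half_lt_one_or_ae_eq_zero (hmeas 1) hβ heq.symm with hlt | hdeg
  · exact tendsto_lintegral_indicator_ltHit_of_lt_one hmeas hindep hident (half_le_self hβ.le)
      (by simpa using hlt)
  · exact tendsto_lintegral_indicator_ltHit_of_ae_eq_zero hmeas hdeg 0 β
end
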